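/- arXiv:0903.2555 — 6 statements merged into one kernel-verified Lean document; each statement's English description precedes it below -/
import Mathlib

section
/- For all subsets X, Y of the positive integers and all integers n ≥ 1 and 0 ≤ k ≤ n, the number of permutations σ of [n] with exactly k (X,Y)-place-value pairs is V_{n,k}^{X,Y} = k! · (x_n − k)! · (x_n^c)! · C(x_n, k) · C(y_n, k) · C(y_n^c, x_n − k), where C(a,b) denotes the binomial coefficient (interpreted as 0 when b > a or b < 0). -/
/-- `cnt X n` is `|X ∩ [n]|` where `[n] = {1, ..., n}`. -/
noncomputable def cnt (X : Set ℕ) (n : ℕ) : ℕ := (X ∩ Set.Icc 1 n).ncard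

/-- `val_{X,Y}(σ)`: number of positions `i ∈ [n]` with `i ∈ X` and `σ_i ∈ Y`
(positions and values of `Fin n` are identified with `{1, ..., n}` via `i ↦ i + 1`). -/
noncomputable def valCount (X Y : Set ℕ) (n : ℕ) (σ : Equiv.Perm (Fin n)) : ℕ :=
  {i : Fin n | ((i : ℕ) + 1) ∈ X ∧ (((σ i : ℕ)) + 1) ∈ Y}.ncard

/-- `V_{n,k}^{X,Y}`: the number of permutations of `[n]` with exactly `k`
`(X,Y)`-place-value pairs. -/
noncomputable def V (X Y : Set ℕ) (n k : ℕ) : ℕ :=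
  Nat.card {σ : Equiv.Perm (Fin n) | valCount X Y n σ = k}

/-!
Restricting a permutation `σ` of `[n]` to the positions in `X` gives an injection
`X ∩ [n] ↪ [n]`, and every such injection extends to exactly `(x_n^c)!` permutations: the
permutations with a given restriction form a coset of the pointwise stabilizer of `X ∩ [n]`.
An injection with exactly `k` values in `Y` amounts to a `k`-subset `T` of the positions
(`C(x_n, k)` choices), an injection `T ↪ Y ∩ [n]` (`(y_n)_k` choices) and an injection of the
remaining `x_n - k` positions into `[n] \ Y` (`(y_n^c)_{x_n - k}` choices). Writing the falling
factorials as `k! C(y_n, k)` and `(x_n - k)! C(y_n^c, x_n - k)` gives the formula.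
-/

open Equiv Function Finset
open scoped Nat

section Counting

variable {α ι : Type*}

theorem Nat.card_subtype_not [Finite α] (p : α → Prop) :
    Nat.card {a // ¬p a} = Nat.card α - Nat.card {a // p a} := by
  classical
  have := Fintype.ofFinite α
  simp only [Nat.card_eq_fintype_card, Fintype.card_subtype_compl]

theorem Nat.card_subtype_comp_eq_mul_of_card_fiber {β γ : Type*} [Finite β] [Fintype γ]
    (r : β → γ) (P : γ → Prop) {m : ℕ} (hm : ∀ c, P c → Nat.card {b // r b = c} = m) :
    Nat.card {b // P (r b)} = Nat.card {c // P c} * m := by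
  classical
  rw [← Nat.card_congr (sigmaSubtypeFiberEquivSubtype r (q := P) fun _ => Iff.rfl),
    Nat.card_sigma, Finset.sum_congr rfl fun c _ => hm c.1 c.2, sum_const, Finset.card_univ,
    smul_eq_mul, Nat.card_eq_fintype_card]

def embeddingWithPreimageEquiv (p : ι → Prop) (q : α → Prop) [DecidablePred p]
    [DecidablePred q] :
    {f : ι ↪ α // ∀ i, q (f i) ↔ p i} ≃
      ({i // p i} ↪ {a // q a}) × ({i // ¬p i} ↪ {a // ¬q a}) where
  toFun f := (f.1.subtypeMap fun i hi => (f.2 i).2 hi,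
    f.1.subtypeMap fun i hi hq => hi ((f.2 i).1 hq))
  invFun g := ⟨(sumCompl p).symm.toEmbedding.trans
      ((g.1.sumMap g.2).trans (sumCompl q).toEmbedding), fun i => by
    by_cases hi : p i
    · simp [sumCompl_symm_apply_of_pos hi, hi, (g.1 ⟨i, hi⟩).2]
    · simp [sumCompl_symm_apply_of_neg hi, hi, (g.2 ⟨i, hi⟩).2]⟩
  left_inv f := by
    ext i
    by_cases hi : p i
    · simp [Embedding.subtypeMap, sumCompl_symm_apply_of_pos hi]
    · simp [Embedding.subtypeMap, sumCompl_symm_apply_of_neg hi]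
  right_inv g := by
    ext i
    · simp [Embedding.subtypeMap, sumCompl_symm_apply_of_pos i.2]
    · simp [Embedding.subtypeMap, sumCompl_symm_apply_of_neg i.2]

theorem card_embedding_with_preimage (p : ι → Prop) (q : α → Prop) [Finite ι] [Finite α] :
    Nat.card {f : ι ↪ α // ∀ i, q (f i) ↔ p i} =
      (Nat.card {a // q a}).descFactorial (Nat.card {i // p i}) *
        (Nat.card {a // ¬q a}).descFactorial (Nat.card {i // ¬p i}) := by
  classical
  have := Fintype.ofFinite ι
  have := Fintype.ofFinite α
  rw [Nat.card_congr (embeddingWithPreimageEquiv p q), Nat.card_prod]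
  simp only [Nat.card_eq_fintype_card, Fintype.card_embedding_eq]

theorem card_embedding_card_preimage_eq [Fintype ι] [Finite α] (q : α → Prop) (k : ℕ) :
    Nat.card {f : ι ↪ α // Nat.card {i // q (f i)} = k} =
      (Nat.card ι).choose k * (Nat.card {a // q a}).descFactorial k *
        (Nat.card α - Nat.card {a // q a}).descFactorial (Nat.card ι - k) := by
  classical
  have hcard (f : ι ↪ α) : Nat.card {i // q (f i)} = #{i | q (f i)} := by
    rw [Nat.card_eq_fintype_card, Fintype.card_subtype]
  have hfiber (T : Finset ι) (hT : #T = k) :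
      Nat.card {f : ι ↪ α // ({i | q (f i)} : Finset ι) = T} =
        (Nat.card {a // q a}).descFactorial k *
          (Nat.card α - Nat.card {a // q a}).descFactorial (Nat.card ι - k) := by
    have hiff : {f : ι ↪ α // ({i | q (f i)} : Finset ι) = T} ≃
        {f : ι ↪ α // ∀ i, q (f i) ↔ i ∈ T} :=
      subtypeEquivRight fun f => by simp [Finset.ext_iff]
    rw [Nat.card_congr hiff, card_embedding_with_preimage, Nat.card_subtype_not,
      Nat.card_subtype_not, Nat.card_eq_finsetCard, hT]
  simp_rw [hcard]
  rw [Nat.card_subtype_comp_eq_mul_of_card_fiber _ (fun T => #T = k) hfiber,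
    Nat.card_eq_fintype_card, Fintype.card_finset_len, Nat.card_eq_fintype_card (α := ι),
    mul_assoc]

theorem card_perm_extending_embedding [Finite α] (p : α → Prop) (f : {a // p a} ↪ α) :
    Nat.card {σ : Perm α // (Embedding.subtype p).trans σ.toEmbedding = f} =
      (Nat.card α - Nat.card {a // p a})! := by
  classical
  have := Fintype.ofFinite α
  set σ₀ : Perm α := f.toEquivRange.extendSubtype (q := (· ∈ Set.range f))
  have hσ₀ (a : {a // p a}) : σ₀ a = f a := f.toEquivRange.extendSubtype_apply_of_mem a a.2
  -- the fiber over `f` is the coset through any extension `σ₀` of the pointwise stabilizer of `p`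
  have hfiber : {σ : Perm α // (Embedding.subtype p).trans σ.toEmbedding = f} ≃
      {τ : Perm α // ∀ a, ¬¬p a → τ a = a} :=
    (Equiv.mulLeft σ₀⁻¹).subtypeEquiv fun σ => by
      simp [DFunLike.ext_iff, ← hσ₀, eq_symm_apply, eq_comm]
  rw [Nat.card_congr (hfiber.trans (Perm.subtypeEquivSubtypePerm _).symm), Nat.card_perm,
    Nat.card_subtype_not]

theorem card_perm_card_pairs_eq [Finite α] (p q : α → Prop) (k : ℕ) :
    Nat.card {σ : Perm α // Nat.card {a // p a ∧ q (σ a)} = k} =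
      (Nat.card {a // p a}).choose k * (Nat.card {a // q a}).descFactorial k *
        (Nat.card α - Nat.card {a // q a}).descFactorial (Nat.card {a // p a} - k) *
        (Nat.card α - Nat.card {a // p a})! := by
  classical
  have := Fintype.ofFinite α
  have hval : {σ : Perm α // Nat.card {a // p a ∧ q (σ a)} = k} ≃
      {σ : Perm α // Nat.card {i // q ((Embedding.subtype p).trans σ.toEmbedding i)} = k} :=
    subtypeEquivRight fun σ => Iff.of_eq <| congrArg (· = k)
      (Nat.card_congr (subtypeSubtypeEquivSubtypeInter p fun a => q (σ a))).symm
  rw [Nat.card_congr hval, Nat.card_subtype_comp_eq_mul_of_card_fiber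
    (fun σ : Perm α => (Embedding.subtype p).trans σ.toEmbedding)
    (fun f => Nat.card {i // q (f i)} = k) fun f _ => card_perm_extending_embedding p f,
    card_embedding_card_preimage_eq]

end Counting

theorem cnt_eq_card_fin (Z : Set ℕ) (n : ℕ) :
    cnt Z n = Nat.card {i : Fin n // (i : ℕ) + 1 ∈ Z} := by
  have himage : Z ∩ Set.Icc 1 n = (fun i : Fin n => (i : ℕ) + 1) '' {i | (i : ℕ) + 1 ∈ Z} := by
    ext m
    constructor
    · rintro ⟨hm, h1, h2⟩
      exact ⟨⟨m - 1, by omega⟩, by simpa [Nat.sub_add_cancel h1] using hm, Nat.sub_add_cancel h1⟩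
    · rintro ⟨i, hi, rfl⟩
      exact ⟨hi, Nat.le_add_left 1 i, i.isLt⟩
  rw [cnt, himage, Set.ncard_image_of_injective _ fun _ _ h => Fin.ext (Nat.add_right_cancel h)]
  rfl

theorem V_formula_general (X Y : Set ℕ) (n k : ℕ) :
    V X Y n k =
      k.factorial * (cnt X n - k).factorial * (n - cnt X n).factorial *
        (cnt X n).choose k * (cnt Y n).choose k *
        (n - cnt Y n).choose (cnt X n - k) := by
  have hV : V X Y n k = Nat.card {σ : Perm (Fin n) //
      Nat.card {i : Fin n // (i : ℕ) + 1 ∈ X ∧ (σ i : ℕ) + 1 ∈ Y} = k} := rfl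
  rw [hV, card_perm_card_pairs_eq (fun i : Fin n => (i : ℕ) + 1 ∈ X) (fun i => (i : ℕ) + 1 ∈ Y),
    ← cnt_eq_card_fin, ← cnt_eq_card_fin, Nat.card_fin, Nat.descFactorial_eq_factorial_mul_choose,
    Nat.descFactorial_eq_factorial_mul_choose]
  ring

/-- Theorem 1 (Kitaev–Remmel): for all `X, Y ⊆ ℕ₊`, `n ≥ 1`, `0 ≤ k ≤ n`,
`V_{n,k}^{X,Y} = k! (x_n - k)! (x_n^c)! C(x_n, k) C(y_n, k) C(y_n^c, x_n - k)`. -/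
theorem V_formula (X Y : Set ℕ) (hX : 0 ∉ X) (hY : 0 ∉ Y) (n k : ℕ)
    (hn : 1 ≤ n) (hk : k ≤ n) :
    V X Y n k =
      k.factorial * (cnt X n - k).factorial * (n - cnt X n).factorial *
        (cnt X n).choose k * (cnt Y n).choose k *
        (n - cnt Y n).choose (cnt X n - k) :=
  V_formula_general X Y n k
end

section
/- For all subsets X, Y of the positive integers and all integers n ≥ 1 and s ≥ 0, the number D_{n,s}^{X,Y} of permutations of [n] with exactly s (X,Y)-descents satisfies D_{n,s}^{X,Y} = (x_n^c)! · Σ_{r=0}^{s} (−1)^{s−r} · C(x_n^c + r, r) · C(n+1, s−r) · Π_{x ∈ X∩[n]} (1 + r + α_{X,n,x} + β_{Y,n,x}). -/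
open scoped Classical

/-- `des_{X,Y}(σ)`: number of `i` with `σ_i > σ_{i+1}`, `σ_i ∈ X` and `σ_{i+1} ∈ Y`
(positions and values of `Fin n` are identified with `{1, ..., n}` via `i ↦ i + 1`). -/
noncomputable def desCount (X Y : Set ℕ) (n : ℕ) (σ : Equiv.Perm (Fin n)) : ℕ :=
  {i : Fin n | ∃ h : (i : ℕ) + 1 < n,
    (σ ⟨(i : ℕ) + 1, h⟩ : ℕ) < (σ i : ℕ) ∧
    ((σ i : ℕ) + 1) ∈ X ∧ ((σ ⟨(i : ℕ) + 1, h⟩ : ℕ) + 1) ∈ Y}.ncard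

/-- `D_{n,s}^{X,Y}`: the number of permutations of `[n]` with exactly `s`
`(X,Y)`-descents. -/
noncomputable def D (X Y : Set ℕ) (n s : ℕ) : ℕ :=
  Nat.card {σ : Equiv.Perm (Fin n) | desCount X Y n σ = s}

/-- `α_{A,n,j} = |{x : j < x ≤ n, x ∉ A}|`. -/
noncomputable def alphaStat (A : Set ℕ) (n j : ℕ) : ℕ := {x : ℕ | j < x ∧ x ≤ n ∧ x ∉ A}.ncard

/-- `β_{A,n,j} = |{x : 1 ≤ x < j, x ∉ A}|`. -/
noncomputable def betaStat (A : Set ℕ) (n j : ℕ) : ℕ := {x : ℕ | 1 ≤ x ∧ x < j ∧ x ∉ A}.ncard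

/-!
Let `E_n(t) = ∑_σ t^{des_{X,Y}(σ)}`. Every permutation of `[n + 1]` arises exactly once by inserting
the letter `n + 1` into a permutation of `[n]`, at one of `n + 1` positions. The insertion destroys
the descent ending at the insertion point, if there is one, and creates the descent formed by
`n + 1` and the next letter exactly when `n + 1 ∈ X` and that letter lies in `Y`. Summing over the
positions gives, with `y_n = |Y ∩ [n]|`,
  `E_{n+1} = (n + 1) E_n + (1 - t) E_n'`                         if `n + 1 ∉ X`,
  `E_{n+1} = (n + 1 - y_n + y_n t) E_n + t (1 - t) E_n'`          if `n + 1 ∈ X`.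
On the other side, `G_n(t) = ∑_r (r + 1) ⋯ (r + x_n^c) ∏_{x ∈ X_n} (1 + r + α + β) t^r` satisfies
`G_{n+1} = G_n'`, resp. `G_{n+1} = (1 + n - y_n) G_n + t G_n'`, which are exactly the recurrences
that make `(1 - t)^{n+1} G_n` obey the recurrences of `E_n`. As `E_0 = 1 = (1 - t) G_0`, we get
`E_n = (1 - t)^{n+1} G_n`, and the formula is the coefficient of `t^s` on both sides.
-/

open Finset Equiv

theorem Fintype.sum_ite_const {α R : Type*} [Fintype α] [CommRing R] (P : α → Prop)
    [DecidablePred P] (a b : R) :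
    ∑ x, (if P x then a else b) = #{x | P x} * a + (Fintype.card α - #{x | P x}) * b := by
  have hcard := card_filter_add_card_filter_not (s := univ) P
  rw [card_univ] at hcard
  rw [sum_ite, sum_const, sum_const, nsmul_eq_mul, nsmul_eq_mul, ← hcard]
  push_cast
  ring

namespace PowerSeries

section CommSemiring

variable {R : Type*} [CommSemiring R]

theorem derivative_X_pow (d : ℕ) : d⁄dX R ((X : R⟦X⟧) ^ d) = (d : R⟦X⟧) * X ^ (d - 1) := by
  rw [derivative_pow, derivative_X, mul_one]

theorem derivative_X_pow_mul_X (d : ℕ) : d⁄dX R ((X : R⟦X⟧) ^ d) * X = (d : R⟦X⟧) * X ^ d := by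
  rw [derivative_X_pow]
  rcases d with _ | d
  · simp
  · rw [mul_assoc, ← pow_succ, Nat.add_sub_cancel]

theorem coeff_X_mul_derivative (f : R⟦X⟧) (r : ℕ) : coeff r (X * d⁄dX R f) = r * coeff r f := by
  rcases r with _ | r
  · simp
  · rw [coeff_succ_X_mul, coeff_derivative, mul_comm]
    push_cast
    rfl

end CommSemiring

section CommRing

variable {R : Type*} [CommRing R]

theorem derivative_one_sub_X_pow_succ (m : ℕ) :
    d⁄dX R ((1 - X : R⟦X⟧) ^ (m + 1)) = -(((m : R⟦X⟧) + 1) * (1 - X) ^ m) := by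
  rw [derivative_pow, map_sub, derivative_one, derivative_X, Nat.add_sub_cancel]
  push_cast
  ring

theorem coeff_one_sub_X_pow (m i : ℕ) : coeff i ((1 - X : R⟦X⟧) ^ m) = (-1) ^ i * m.choose i := by
  have h : (1 - X : R⟦X⟧) ^ m = rescale (-1) (((1 + Polynomial.X) ^ m : Polynomial R) : R⟦X⟧) := by
    simp [rescale_X, sub_eq_add_neg]
  rw [h, coeff_rescale, Polynomial.coeff_coe, Polynomial.coeff_one_add_X_pow]

theorem coeff_one_sub_X_pow_mul_mk (m s : ℕ) (a : ℕ → R) :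
    coeff s ((1 - X : R⟦X⟧) ^ m * mk a) =
      ∑ r ∈ range (s + 1), (-1) ^ (s - r) * m.choose (s - r) * a r := by
  rw [mul_comm, coeff_mul,
    Nat.sum_antidiagonal_eq_sum_range_succ fun i j => coeff i (mk a) * coeff j ((1 - X : R⟦X⟧) ^ m)]
  simp only [coeff_mk, coeff_one_sub_X_pow]
  exact sum_congr rfl fun r _ => by ring

end CommRing

end PowerSeries

open PowerSeries hiding X

section Words

variable (X Y : Set ℕ)

/-- `0 < b` ensures that the value `0`, with which `word` pads a permutation, never ends a
descent. -/
def IsDescent (a b : ℕ) : Prop := 0 < b ∧ b < a ∧ a ∈ X ∧ b ∈ Y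

noncomputable def wordDes (w : ℕ → ℕ) (m : ℕ) : ℕ :=
  #{k ∈ range m | IsDescent X Y (w k) (w (k + 1))}

def insertAt (w : ℕ → ℕ) (p v k : ℕ) : ℕ :=
  if k < p then w k else if k = p then v else w (k - 1)

variable {X Y}

theorem wordDes_insertAt {w : ℕ → ℕ} {p m v : ℕ} (hpm : p ≤ m) (hv : ∀ k, w k < v) :
    wordDes X Y (insertAt w p v) (m + 1) +
        (if 0 < p ∧ IsDescent X Y (w (p - 1)) (w p) then 1 else 0) =
      wordDes X Y w m + (if IsDescent X Y v (w p) then 1 else 0) := by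
  obtain ⟨q, rfl⟩ := Nat.exists_eq_add_of_le hpm
  have not_descent_into_v : ∀ k, ¬ IsDescent X Y (w k) v := fun k h => (hv k).not_gt h.2.1
  have head : ∑ k ∈ range p, (if IsDescent X Y (insertAt w p v k) (insertAt w p v (k + 1))
        then 1 else 0) + (if 0 < p ∧ IsDescent X Y (w (p - 1)) (w p) then 1 else 0) =
      ∑ k ∈ range p, (if IsDescent X Y (w k) (w (k + 1)) then 1 else 0) := by
    rcases p with _ | j
    · simp
    rw [sum_range_succ, sum_range_succ]
    have hlast : insertAt w (j + 1) v (j + 1) = v := by simp [insertAt]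
    have hj : insertAt w (j + 1) v j = w j := by simp [insertAt]
    simp only [hlast, hj, not_descent_into_v, if_false, add_zero, Nat.add_sub_cancel,
      Nat.zero_lt_succ, true_and]
    congr 1
    refine sum_congr rfl fun k hk => ?_
    have hk := mem_range.mp hk
    simp only [insertAt, if_pos (show k < j + 1 by omega), if_pos (show k + 1 < j + 1 by omega)]
  have hmid : insertAt w p v p = v := by simp [insertAt]
  have hnext : insertAt w p v (p + 1) = w p := by simp [insertAt]
  have htail : ∀ k, insertAt w p v (p + (k + 1)) = w (p + k) := fun k => by
    simp only [insertAt, if_neg (show ¬ p + (k + 1) < p by omega),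
      if_neg (show p + (k + 1) ≠ p by omega), show p + (k + 1) - 1 = p + k by omega]
  have htail' : ∀ k, insertAt w p v (p + (k + 1) + 1) = w (p + k + 1) := fun k => by
    rw [show p + (k + 1) + 1 = p + (k + 1 + 1) by ring, htail]
    rfl
  simp only [wordDes, card_filter]
  rw [show p + q + 1 = p + (q + 1) by ring, sum_range_add _ p (q + 1), sum_range_succ' _ q,
    sum_range_add _ p q]
  simp only [add_zero, hmid, hnext, htail, htail']
  rw [← head]
  ring

end Words

theorem cnt_eq_card (A : Set ℕ) (n : ℕ) : cnt A n = #{x ∈ Icc 1 n | x ∈ A} := by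
  rw [cnt, ← Set.ncard_coe_finset]
  congr 1
  ext x
  simp only [Set.mem_inter_iff, Set.mem_Icc, coe_filter, mem_Icc, Set.mem_ofPred_eq]
  tauto

section Permutations

variable {X Y : Set ℕ} {n : ℕ}

def word (σ : Perm (Fin n)) (k : ℕ) : ℕ := if h : k < n then σ ⟨k, h⟩ + 1 else 0

theorem word_of_lt (σ : Perm (Fin n)) {k : ℕ} (h : k < n) : word σ k = σ ⟨k, h⟩ + 1 := dif_pos h

theorem word_of_le (σ : Perm (Fin n)) {k : ℕ} (h : n ≤ k) : word σ k = 0 := dif_neg h.not_gt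

theorem word_lt (σ : Perm (Fin n)) (k : ℕ) : word σ k < n + 1 := by
  unfold word
  split <;> omega

theorem desCount_eq_wordDes (σ : Perm (Fin n)) : desCount X Y n σ = wordDes X Y (word σ) n := by
  rw [desCount, ← Set.ncard_image_of_injective _ Fin.val_injective, wordDes,
    ← Set.ncard_coe_finset]
  congr 1
  ext k
  simp only [Set.mem_image, Set.mem_ofPred_eq, mem_coe, mem_filter, mem_range]
  unfold IsDescent
  constructor
  · rintro ⟨i, ⟨h, hlt, hX, hY⟩, rfl⟩
    simp only [word_of_lt σ i.isLt, word_of_lt σ h, Fin.eta]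
    exact ⟨i.isLt, by omega, by omega, hX, hY⟩
  · rintro ⟨hk, hpos, hlt, hX, hY⟩
    have h : k + 1 < n := by
      by_contra h
      rw [word_of_le σ (by omega)] at hpos
      exact hpos.false
    simp only [word_of_lt σ hk, word_of_lt σ h] at hlt hX hY
    exact ⟨⟨k, hk⟩, ⟨h, Nat.lt_of_succ_lt_succ hlt, hX, hY⟩, rfl⟩

/-- Insertion of the letter `n + 1` at position `p` of the word of `τ` (see `word_insertMax`). -/
def insertMax (p : Fin (n + 1)) (τ : Perm (Fin n)) : Perm (Fin (n + 1)) :=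
  ((finSuccEquiv' p).trans (Equiv.optionCongr τ)).trans (finSuccEquiv' (Fin.last n)).symm

@[simp]
theorem insertMax_apply_self (p : Fin (n + 1)) (τ : Perm (Fin n)) :
    insertMax p τ p = Fin.last n := by
  simp [insertMax]

@[simp]
theorem insertMax_apply_succAbove (p : Fin (n + 1)) (τ : Perm (Fin n)) (j : Fin n) :
    insertMax p τ (p.succAbove j) = (τ j).castSucc := by
  simp [insertMax, Fin.succAbove_last]

theorem word_insertMax (p : Fin (n + 1)) (τ : Perm (Fin n)) :
    word (insertMax p τ) = insertAt (word τ) p (n + 1) := by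
  funext k
  unfold insertAt
  rcases lt_trichotomy k p with hk | rfl | hk
  · have hkn : k < n := by omega
    have hsucc : (⟨k, by omega⟩ : Fin (n + 1)) = p.succAbove ⟨k, hkn⟩ :=
      (Fin.succAbove_of_castSucc_lt p ⟨k, hkn⟩ hk).symm
    rw [if_pos hk, word_of_lt _ (by omega), word_of_lt _ hkn, hsucc, insertMax_apply_succAbove,
      Fin.val_castSucc]
  · rw [if_neg (lt_irrefl _), if_pos rfl, word_of_lt _ p.isLt, Fin.eta, insertMax_apply_self,
      Fin.val_last]
  · rw [if_neg (by omega), if_neg (by omega)]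
    by_cases hkn : k < n + 1
    · have hk' : k - 1 < n := by omega
      rw [word_of_lt _ hkn, word_of_lt _ hk',
        show (⟨k, hkn⟩ : Fin (n + 1)) = p.succAbove ⟨k - 1, hk'⟩ by
          rw [Fin.succAbove_of_le_castSucc _ _ (by simp [Fin.le_def]; omega)]
          ext; simp; omega,
        insertMax_apply_succAbove, Fin.val_castSucc]
    · rw [word_of_le _ (by omega), word_of_le _ (by omega)]

theorem insertMax_injective :
    Function.Injective fun x : Fin (n + 1) × Perm (Fin n) => insertMax x.1 x.2 := by
  rintro ⟨p, τ⟩ ⟨q, ρ⟩ h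
  simp only at h
  obtain rfl : p = q := (insertMax q ρ).injective <| by
    rw [← h, insertMax_apply_self, h, insertMax_apply_self]
  refine Prod.ext rfl (Equiv.ext fun j => Fin.castSucc_injective n ?_)
  rw [← insertMax_apply_succAbove, ← insertMax_apply_succAbove, h]

theorem insertMax_bijective :
    Function.Bijective fun x : Fin (n + 1) × Perm (Fin n) => insertMax x.1 x.2 := by
  rw [Fintype.bijective_iff_injective_and_card]
  refine ⟨insertMax_injective, ?_⟩
  simp [Fintype.card_perm, Nat.factorial_succ]

theorem desCount_insertMax (p : Fin (n + 1)) (τ : Perm (Fin n)) :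
    desCount X Y (n + 1) (insertMax p τ) +
        (if 0 < (p : ℕ) ∧ IsDescent X Y (word τ (p - 1)) (word τ p) then 1 else 0) =
      desCount X Y n τ + (if IsDescent X Y (n + 1) (word τ p) then 1 else 0) := by
  rw [desCount_eq_wordDes, desCount_eq_wordDes, word_insertMax]
  exact wordDes_insertAt (Nat.lt_succ_iff.mp p.isLt) (word_lt τ)

theorem card_filter_isDescent_sub_one (τ : Perm (Fin n)) :
    #{p : Fin (n + 1) | 0 < (p : ℕ) ∧ IsDescent X Y (word τ (p - 1)) (word τ p)} =
      desCount X Y n τ := by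
  rw [desCount_eq_wordDes, wordDes, card_filter, card_filter, Fin.sum_univ_succ]
  simp only [Fin.val_zero, lt_irrefl, false_and, if_false, zero_add, Fin.val_succ,
    Nat.succ_pos, true_and, Nat.add_sub_cancel]
  exact Fin.sum_univ_eq_sum_range
    (fun k => if IsDescent X Y (word τ k) (word τ (k + 1)) then 1 else 0) n

theorem card_filter_word_mem (τ : Perm (Fin n)) :
    #{p : Fin (n + 1) | 0 < word τ p ∧ word τ p ∈ Y} = cnt Y n := by
  rw [card_filter, Fin.sum_univ_castSucc, Fin.val_last, word_of_le τ le_rfl]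
  simp only [Fin.val_castSucc, word_of_lt τ (Fin.isLt _), Fin.eta, lt_irrefl, false_and,
    if_false, add_zero, Nat.succ_pos, true_and]
  rw [Equiv.sum_comp τ (fun j => if (j : ℕ) + 1 ∈ Y then 1 else 0),
    Fin.sum_univ_eq_sum_range (fun k => if k + 1 ∈ Y then 1 else 0), cnt_eq_card, card_filter,
    range_eq_Ico, sum_Ico_add' (fun x => if x ∈ Y then 1 else 0), zero_add,
    Ico_add_one_right_eq_Icc]

end Permutations

section DescentSeries

variable {X Y : Set ℕ} {n : ℕ}

noncomputable def descentSeries (X Y : Set ℕ) (n : ℕ) : PowerSeries ℤ :=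
  ∑ σ : Perm (Fin n), PowerSeries.X ^ desCount X Y n σ

theorem coeff_descentSeries (s : ℕ) : coeff s (descentSeries X Y n) = D X Y n s := by
  simp only [descentSeries, map_sum, coeff_X_pow, sum_boole, D, Nat.card_eq_fintype_card,
    Fintype.card_subtype, Set.mem_ofPred_eq, eq_comm]

theorem descentSeries_zero : descentSeries X Y 0 = 1 := by
  simp [descentSeries, desCount_eq_wordDes, wordDes]

theorem descentSeries_succ_eq_sum_insertMax (X Y : Set ℕ) (n : ℕ) :
    descentSeries X Y (n + 1) =
      ∑ τ : Perm (Fin n), ∑ p : Fin (n + 1),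
        PowerSeries.X ^ desCount X Y (n + 1) (insertMax p τ) := by
  rw [descentSeries, ← Fintype.sum_bijective _ insertMax_bijective _ _ fun _ => rfl,
    Fintype.sum_prod_type, sum_comm]

theorem sum_X_pow_desCount_insertMax_of_not_mem (hX : n + 1 ∉ X) (τ : Perm (Fin n)) :
    ∑ p : Fin (n + 1), (PowerSeries.X : PowerSeries ℤ) ^ desCount X Y (n + 1) (insertMax p τ) =
      (n + 1 : PowerSeries ℤ) * PowerSeries.X ^ desCount X Y n τ +
        (1 - PowerSeries.X) * d⁄dX ℤ (PowerSeries.X ^ desCount X Y n τ) := by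
  set d := desCount X Y n τ
  have hdes : ∀ p : Fin (n + 1), desCount X Y (n + 1) (insertMax p τ) =
      if 0 < (p : ℕ) ∧ IsDescent X Y (word τ (p - 1)) (word τ p) then d - 1 else d := by
    intro p
    have h := desCount_insertMax (X := X) (Y := Y) p τ
    rw [if_neg (show ¬ IsDescent X Y (n + 1) (word τ p) from fun h => hX h.2.2.1)] at h
    split_ifs at h ⊢ <;> omega
  simp_rw [hdes, apply_ite (PowerSeries.X ^ ·), Fintype.sum_ite_const,
    card_filter_isDescent_sub_one, Fintype.card_fin]
  push_cast
  linear_combination -derivative_X_pow (R := ℤ) d + derivative_X_pow_mul_X (R := ℤ) d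

theorem sum_X_pow_desCount_insertMax_of_mem (hX : n + 1 ∈ X) (τ : Perm (Fin n)) :
    ∑ p : Fin (n + 1), (PowerSeries.X : PowerSeries ℤ) ^ desCount X Y (n + 1) (insertMax p τ) =
      ((n : PowerSeries ℤ) + 1 - (cnt Y n : PowerSeries ℤ) +
          (cnt Y n : PowerSeries ℤ) * PowerSeries.X) * PowerSeries.X ^ desCount X Y n τ +
        PowerSeries.X * (1 - PowerSeries.X) * d⁄dX ℤ (PowerSeries.X ^ desCount X Y n τ) := by
  set d := desCount X Y n τ
  set ends : Fin (n + 1) → Prop :=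
    fun p => 0 < (p : ℕ) ∧ IsDescent X Y (word τ (p - 1)) (word τ p)
  set starts : Fin (n + 1) → Prop := fun p => 0 < word τ p ∧ word τ p ∈ Y
  have hse : ∀ p, ends p → starts p := fun p hp => ⟨hp.2.1, hp.2.2.2.2⟩
  have hsub : univ.filter ends ⊆ univ.filter starts := monotone_filter_right univ fun p _ => hse p
  have hdes : ∀ p : Fin (n + 1), desCount X Y (n + 1) (insertMax p τ) =
      if starts p ∧ ¬ ends p then d + 1 else d := by
    intro p
    have hnew : IsDescent X Y (n + 1) (word τ p) ↔ starts p :=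
      ⟨fun h => ⟨h.1, h.2.2.2⟩, fun h => ⟨h.1, word_lt τ p, hX, h.2⟩⟩
    have h : desCount X Y (n + 1) (insertMax p τ) + (if ends p then 1 else 0) =
        d + (if starts p then 1 else 0) := by
      rw [← if_congr hnew rfl rfl]
      exact desCount_insertMax p τ
    by_cases he : ends p
    · rw [if_pos he, if_pos (hse p he)] at h
      rw [if_neg fun h => h.2 he]
      omega
    · by_cases hs : starts p <;> simp [he, hs] at h ⊢ <;> omega
  have hcard : (#{p | starts p ∧ ¬ ends p} : PowerSeries ℤ) = cnt Y n - d := by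
    rw [filter_and_not, card_sdiff_of_subset hsub, Nat.cast_sub (card_le_card hsub),
      card_filter_word_mem, card_filter_isDescent_sub_one]
  simp_rw [hdes, apply_ite (PowerSeries.X ^ ·)]
  rw [Fintype.sum_ite_const, hcard, Fintype.card_fin]
  push_cast
  linear_combination (PowerSeries.X - 1) * derivative_X_pow_mul_X (R := ℤ) d

theorem descentSeries_succ_of_not_mem (hX : n + 1 ∉ X) :
    descentSeries X Y (n + 1) = (n + 1 : PowerSeries ℤ) * descentSeries X Y n +
      (1 - PowerSeries.X) * d⁄dX ℤ (descentSeries X Y n) := by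
  rw [descentSeries_succ_eq_sum_insertMax]
  simp only [sum_X_pow_desCount_insertMax_of_not_mem hX, descentSeries, map_sum, mul_sum,
    sum_add_distrib]

theorem descentSeries_succ_of_mem (hX : n + 1 ∈ X) :
    descentSeries X Y (n + 1) =
      ((n : PowerSeries ℤ) + 1 - (cnt Y n : PowerSeries ℤ) +
          (cnt Y n : PowerSeries ℤ) * PowerSeries.X) * descentSeries X Y n +
        PowerSeries.X * (1 - PowerSeries.X) * d⁄dX ℤ (descentSeries X Y n) := by
  rw [descentSeries_succ_eq_sum_insertMax]
  simp only [sum_X_pow_desCount_insertMax_of_mem hX, descentSeries, map_sum, mul_sum,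
    sum_add_distrib]

end DescentSeries

section Statistics

variable {A : Set ℕ} {n : ℕ}

theorem cnt_succ_of_mem (h : n + 1 ∈ A) : cnt A (n + 1) = cnt A n + 1 := by
  rw [cnt_eq_card, cnt_eq_card, ← insert_Icc_right_eq_Icc_add_one (by omega), filter_insert,
    if_pos h, card_insert_of_notMem (by simp)]

theorem cnt_succ_of_not_mem (h : n + 1 ∉ A) : cnt A (n + 1) = cnt A n := by
  rw [cnt_eq_card, cnt_eq_card, ← insert_Icc_right_eq_Icc_add_one (by omega), filter_insert,
    if_neg h]

theorem cnt_le (A : Set ℕ) (n : ℕ) : cnt A n ≤ n := by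
  simpa [cnt_eq_card] using card_filter_le (Icc 1 n) (· ∈ A)

theorem alphaStat_eq_card (A : Set ℕ) (n j : ℕ) : alphaStat A n j = #{x ∈ Ioc j n | x ∉ A} := by
  rw [alphaStat, ← Set.ncard_coe_finset]
  congr 1
  ext x
  simp only [Set.mem_ofPred_eq, coe_filter, mem_Ioc, and_assoc]

theorem alphaStat_self (A : Set ℕ) (n : ℕ) : alphaStat A n n = 0 := by
  simp [alphaStat_eq_card]

theorem alphaStat_succ_of_mem {j : ℕ} (h : n + 1 ∈ A) (hj : j ≤ n) :
    alphaStat A (n + 1) j = alphaStat A n j := by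
  rw [alphaStat_eq_card, alphaStat_eq_card, ← insert_Ioc_right_eq_Ioc_add_one hj, filter_insert,
    if_neg (not_not.mpr h)]

theorem alphaStat_succ_of_not_mem {j : ℕ} (h : n + 1 ∉ A) (hj : j ≤ n) :
    alphaStat A (n + 1) j = alphaStat A n j + 1 := by
  rw [alphaStat_eq_card, alphaStat_eq_card, ← insert_Ioc_right_eq_Ioc_add_one hj, filter_insert,
    if_pos h, card_insert_of_notMem (by simp)]

theorem betaStat_succ_left (A : Set ℕ) (n j : ℕ) : betaStat A (n + 1) j = betaStat A n j := rfl

theorem betaStat_succ_right (A : Set ℕ) (m n : ℕ) : (betaStat A m (n + 1) : ℤ) = n - cnt A n := by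
  have hbeta : betaStat A m (n + 1) = #{x ∈ Icc 1 n | x ∉ A} := by
    rw [betaStat, ← Set.ncard_coe_finset]
    congr 1
    ext x
    simp only [Set.mem_ofPred_eq, coe_filter, mem_Icc, Nat.lt_succ_iff, and_assoc]
  have hsplit := card_filter_add_card_filter_not (s := Icc 1 n) (· ∈ A)
  rw [Nat.card_Icc, Nat.add_sub_cancel, ← cnt_eq_card, ← hbeta] at hsplit
  omega

end Statistics

section HallRemmelSeries

variable {X Y : Set ℕ} {n : ℕ}

noncomputable def hrProduct (X Y : Set ℕ) (n r : ℕ) : ℤ :=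
  ∏ x ∈ (Finset.Icc 1 n).filter (· ∈ X),
    (1 + (r : ℤ) + (alphaStat X n x : ℤ) + (betaStat Y n x : ℤ))

theorem hrProduct_succ_of_not_mem (hX : n + 1 ∉ X) (r : ℕ) :
    hrProduct X Y (n + 1) r = hrProduct X Y n (r + 1) := by
  rw [hrProduct, hrProduct, ← insert_Icc_right_eq_Icc_add_one (by omega), filter_insert, if_neg hX]
  refine prod_congr rfl fun x hx => ?_
  rw [alphaStat_succ_of_not_mem hX (mem_Icc.mp (mem_filter.mp hx).1).2, betaStat_succ_left]
  push_cast
  ring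

theorem hrProduct_succ_of_mem (hX : n + 1 ∈ X) (r : ℕ) :
    hrProduct X Y (n + 1) r = (1 + r + n - cnt Y n) * hrProduct X Y n r := by
  rw [hrProduct, hrProduct, ← insert_Icc_right_eq_Icc_add_one (by omega), filter_insert, if_pos hX,
    prod_insert (by simp), alphaStat_self, betaStat_succ_right, Nat.cast_zero, add_zero,
    ← add_sub_assoc]
  congr 1
  refine prod_congr rfl fun x hx => ?_
  rw [alphaStat_succ_of_mem hX (mem_Icc.mp (mem_filter.mp hx).1).2, betaStat_succ_left]

noncomputable def hrSeries (X Y : Set ℕ) (n : ℕ) : PowerSeries ℤ :=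
  PowerSeries.mk fun r => ((r + 1).ascFactorial (n - cnt X n) : ℤ) * hrProduct X Y n r

theorem hrSeries_zero : hrSeries X Y 0 = PowerSeries.mk 1 := by
  ext r
  simp [hrSeries, hrProduct]

theorem hrSeries_succ_of_not_mem (hX : n + 1 ∉ X) :
    hrSeries X Y (n + 1) = d⁄dX ℤ (hrSeries X Y n) := by
  ext r
  have hc : n + 1 - cnt X (n + 1) = n - cnt X n + 1 := by
    have := cnt_le X n
    rw [cnt_succ_of_not_mem hX]
    omega
  have hasc : (r + 1).ascFactorial (n - cnt X n + 1) =
      (r + 1) * (r + 1 + 1).ascFactorial (n - cnt X n) := by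
    rw [add_comm (n - cnt X n) 1, ← Nat.ascFactorial_mul_ascFactorial]
    simp [Nat.ascFactorial_succ]
  rw [coeff_derivative, hrSeries, hrSeries, coeff_mk, coeff_mk, hc, hasc,
    hrProduct_succ_of_not_mem hX]
  push_cast
  ring

theorem hrSeries_succ_of_mem (hX : n + 1 ∈ X) :
    hrSeries X Y (n + 1) = (1 + n - cnt Y n : ℤ) • hrSeries X Y n +
      PowerSeries.X * d⁄dX ℤ (hrSeries X Y n) := by
  ext r
  have hc : n + 1 - cnt X (n + 1) = n - cnt X n := by
    rw [cnt_succ_of_mem hX]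
    omega
  rw [map_add, coeff_X_mul_derivative, map_smul, hrSeries, hrSeries, coeff_mk, coeff_mk, hc,
    hrProduct_succ_of_mem hX, smul_eq_mul]
  ring

end HallRemmelSeries

theorem descentSeries_eq_one_sub_X_pow_mul_hrSeries (X Y : Set ℕ) (n : ℕ) :
    descentSeries X Y n = (1 - PowerSeries.X) ^ (n + 1) * hrSeries X Y n := by
  induction n with
  | zero =>
    rw [descentSeries_zero, hrSeries_zero, zero_add, pow_one, mul_comm, mk_one_mul_one_sub_eq_one]
  | succ n ih =>
    by_cases hX : n + 1 ∈ X
    · rw [descentSeries_succ_of_mem hX, hrSeries_succ_of_mem hX, ih]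
      simp only [Derivation.leibniz, smul_eq_mul, derivative_one_sub_X_pow_succ, zsmul_eq_mul]
      push_cast
      ring
    · rw [descentSeries_succ_of_not_mem hX, hrSeries_succ_of_not_mem hX, ih]
      simp only [Derivation.leibniz, smul_eq_mul, derivative_one_sub_X_pow_succ]
      ring

theorem HR_formula_one_general (X Y : Set ℕ) (n s : ℕ) :
    (D X Y n s : ℤ) =
      ((n - cnt X n).factorial : ℤ) *
        ∑ r ∈ Finset.range (s + 1),
          (-1 : ℤ) ^ (s - r) * ((n - cnt X n + r).choose r : ℤ) *
            ((n + 1).choose (s - r) : ℤ) *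
            ∏ x ∈ (Finset.Icc 1 n).filter (· ∈ X),
              (1 + (r : ℤ) + (alphaStat X n x : ℤ) + (betaStat Y n x : ℤ)) := by
  rw [← coeff_descentSeries, descentSeries_eq_one_sub_X_pow_mul_hrSeries, hrSeries,
    coeff_one_sub_X_pow_mul_mk, mul_sum]
  refine sum_congr rfl fun r _ => ?_
  rw [Nat.ascFactorial_eq_factorial_mul_choose, add_comm r, Nat.choose_symm_add, hrProduct]
  push_cast
  ring

/-- Theorem 3 (Hall–Remmel): for all `X, Y ⊆ ℕ₊`, `n ≥ 1`, `s ≥ 0`,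
`D_{n,s}^{X,Y} = x_n^c! ∑_{r=0}^s (-1)^{s-r} C(x_n^c + r, r) C(n+1, s-r)
∏_{x ∈ X_n} (1 + r + α_{X,n,x} + β_{Y,n,x})`. -/
theorem HR_formula_one (X Y : Set ℕ) (hX : 0 ∉ X) (hY : 0 ∉ Y) (n s : ℕ) (hn : 1 ≤ n) :
    (D X Y n s : ℤ) =
      ((n - cnt X n).factorial : ℤ) *
        ∑ r ∈ Finset.range (s + 1),
          (-1 : ℤ) ^ (s - r) * ((n - cnt X n + r).choose r : ℤ) *
            ((n + 1).choose (s - r) : ℤ) *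
            ∏ x ∈ (Finset.Icc 1 n).filter (· ∈ X),
              (1 + (r : ℤ) + (alphaStat X n x : ℤ) + (betaStat Y n x : ℤ)) :=
  HR_formula_one_general X Y n s
end

section
/- For all subsets X, Y of the positive integers and all integers n ≥ 1 and s ≥ 0, the number D_{n,s}^{X,Y} of permutations of [n] with exactly s (X,Y)-descents satisfies D_{n,s}^{X,Y} = (x_n^c)! · Σ_{r=0}^{x_n − s} (−1)^{x_n − s − r} · C(x_n^c + r, r) · C(n+1, x_n − s − r) · Π_{x ∈ X∩[n]} (r + β_{X,n,x} − β_{Y,n,x}). -/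
open scoped Classical

/-!
Both sides satisfy the same recurrence in `n`, with `s` ranging over all of `ℤ`.

Every permutation of `[n+1]` arises exactly once by inserting `n+1` into one of the `n+1` gaps of
a permutation of `[n]`. Since `n+1` exceeds every other entry, the insertion destroys the
`(X,Y)`-descent straddling the gap, if there is one, and creates the descent `(n+1, next entry)`
exactly when `n+1 ∈ X` and the next entry lies in `Y`. Counting gaps, with `y_n = |Y ∩ [n]|`:
`D_{n+1,s} = (n+1-s) D_{n,s} + (s+1) D_{n,s+1}` if `n+1 ∉ X`, and
`D_{n+1,s} = (n+1-y_n+s) D_{n,s} + (y_n-s+1) D_{n,s-1}` if `n+1 ∈ X`.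

On the right-hand side, the step from `n` to `n+1` multiplies the `r`-th coefficient by
`(r + x_n^c + 1) / (x_n^c + 1)` in the first case and by `r + y_n - x_n` in the second, and one
Pascal-type identity for the alternating convolution with `C(N, ·)` turns either factor into the
corresponding recurrence.
-/

theorem List.insertIdx_eq_take_append_drop {α : Type*} (a : α) :
    ∀ (l : List α) (k : ℕ), k ≤ l.length → l.insertIdx k a = l.take k ++ a :: l.drop k
  | _, 0, _ => by simp
  | b :: l, k + 1, h => by
    simp [List.insertIdx_eq_take_append_drop a l k (by simpa using h)]

theorem List.sum_map_ite_eq_countP_mul {α R : Type*} [NonAssocSemiring R] (L : List α)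
    (p : α → Prop) [DecidablePred p] (c : R) :
    (L.map fun x => if p x then c else 0).sum = L.countP p * c := by
  rw [List.sum_map_ite]
  simp [List.countP_eq_length_filter]

theorem Nat.add_one_mul_choose_add_one_add (c t : ℕ) :
    (c + 1) * (c + 1 + t).choose t = (c + 1 + t) * (c + t).choose t := by
  rw [Nat.choose_symm_of_eq_add (show c + 1 + t = t + (c + 1) by omega), ← Nat.choose_symm_add,
    show c + 1 + t = c + t + 1 by omega, Nat.add_one_mul_choose_eq, mul_comm]

theorem Nat.cast_add_one_mul_choose_add_one {R : Type*} [CommRing R] (N m : ℕ) :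
    (m + 1 : R) * N.choose (m + 1) = (N - m) * N.choose m := by
  have h := Nat.add_one_mul_choose_eq N m
  rw [Nat.choose_succ_succ'] at h
  have h' := congrArg (Nat.cast : ℕ → R) h
  push_cast at h'
  linear_combination -h'

namespace HallRemmel

open Finset

theorem _root_.Finset.card_filter_ite_eq {α β : Type*} [DecidableEq β] (t : Finset α)
    (P : α → Prop) [DecidablePred P] {a b : β} (hab : a ≠ b) (s : β) :
    #{k ∈ t | (if P k then b else a) = s} =
      (if a = s then #t - #{k ∈ t | P k} else 0) + (if b = s then #{k ∈ t | P k} else 0) := by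
  by_cases ha : a = s
  · subst ha
    simp [hab.symm, ite_eq_right_iff, filter_not, card_sdiff_of_subset (filter_subset _ _)]
  · by_cases hb : b = s
    · subst hb
      simp [ha, ite_eq_left_iff]
    · simp [ha, hb, apply_ite (· = s)]

theorem _root_.List.countP_permutations'Aux {α : Type*} (M : α) (l : List α)
    (p : List α → Bool) :
    (l.permutations'Aux M).countP p =
      #{k ∈ range (l.length + 1) | p (l.insertIdx k M)} := by
  have : l.permutations'Aux M = (List.range (l.length + 1)).map (l.insertIdx · M) :=
    List.ext_getElem (by simp [List.length_permutations'Aux]) fun k _ _ => by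
      simp [List.getElem_permutations'Aux]
  rw [this, List.countP_map, List.countP_eq_length_filter, card_def, filter_val, range_val,
    Multiset.range, Multiset.filter_coe, Multiset.coe_card]
  simp [Function.comp_def]

theorem _root_.List.countP_eq_card_filter_range {α : Type*} (p : α → Prop) [DecidablePred p]
    (l : List α) :
    l.countP p = #{i ∈ range l.length | ∃ a ∈ l[i]?, p a} := by
  induction l with
  | nil => simp
  | cons a l ih =>
    rw [List.countP_cons, ih, List.length_cons, card_filter, card_filter, sum_range_succ']
    simp

theorem cnt_eq_card (A : Set ℕ) (n : ℕ) : cnt A n = #{x ∈ Icc 1 n | x ∈ A} := by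
  rw [cnt, ← Set.ncard_coe_finset]
  congr 1
  ext x
  simp only [Set.mem_inter_iff, Set.mem_Icc, coe_filter, mem_Icc, Set.mem_ofPred_eq]
  tauto

theorem cnt_succ (A : Set ℕ) (n : ℕ) :
    cnt A (n + 1) = cnt A n + if n + 1 ∈ A then 1 else 0 := by
  rw [cnt_eq_card, cnt_eq_card, ← insert_Icc_right_eq_Icc_add_one (by omega), filter_insert]
  split_ifs <;> simp

theorem cnt_le (A : Set ℕ) (n : ℕ) : cnt A n ≤ n := by
  rw [cnt_eq_card]
  exact (card_filter_le _ _).trans_eq (Nat.card_Icc 1 n)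

theorem cnt_eq_countP_range' (A : Set ℕ) (n : ℕ) :
    cnt A n = (List.range' 1 n).countP (· ∈ A) := by
  induction n with
  | zero => simp [cnt_eq_card]
  | succ n ih =>
    rw [cnt_succ, ih, List.range'_1_concat, List.countP_append, Nat.add_comm 1 n]
    simp

theorem betaStat_succ (A : Set ℕ) (m n : ℕ) : betaStat A m (n + 1) = n - cnt A n := by
  have hset : {x : ℕ | 1 ≤ x ∧ x < n + 1 ∧ x ∉ A} = ↑({x ∈ Icc 1 n | x ∉ A}) := by
    ext x
    simp only [Set.mem_ofPred_eq, coe_filter, mem_Icc, Nat.lt_succ_iff, and_assoc]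
  rw [betaStat, hset, Set.ncard_coe_finset, filter_not, card_sdiff_of_subset (filter_subset _ _),
    Nat.card_Icc, ← cnt_eq_card, Nat.add_sub_cancel]

section Descents

variable (X Y : Set ℕ)

def IsDescent (a b : ℕ) : Prop := b < a ∧ a ∈ X ∧ b ∈ Y

noncomputable def listDes : List ℕ → ℕ
  | a :: b :: l => (if IsDescent X Y a b then 1 else 0) + listDes (b :: l)
  | _ => 0

theorem listDes_cons (a : ℕ) (l : List ℕ) :
    listDes X Y (a :: l) =
      (if ∃ b ∈ l.head?, IsDescent X Y a b then 1 else 0) + listDes X Y l := by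
  cases l <;> simp [listDes]

theorem listDes_append (u v : List ℕ) :
    listDes X Y (u ++ v) = listDes X Y u + listDes X Y v +
      if ∃ a ∈ u.getLast?, ∃ b ∈ v.head?, IsDescent X Y a b then 1 else 0 := by
  induction u with
  | nil => simp [listDes]
  | cons a u ih =>
    rcases u with _ | ⟨b, u⟩
    · simp [listDes_cons, listDes, add_comm]
    · rw [List.cons_append, listDes_cons, ih, listDes_cons X Y a]
      simp only [List.cons_append, List.head?_cons, List.getLast?_cons_cons]
      ac_rfl

theorem listDes_eq_card (l : List ℕ) :
    listDes X Y l =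
      #{i ∈ range l.length | ∃ a ∈ l[i]?, ∃ b ∈ l[i + 1]?, IsDescent X Y a b} := by
  induction l with
  | nil => simp [listDes]
  | cons a l ih =>
    rw [listDes_cons, ih, List.length_cons, card_filter, card_filter, sum_range_succ', add_comm]
    simp [List.head?_eq_getElem?]

def GapDescent (l : List ℕ) (k : ℕ) : Prop :=
  k ≠ 0 ∧ ∃ a ∈ l[k - 1]?, ∃ b ∈ l[k]?, IsDescent X Y a b

def DescentFrom (M : ℕ) (l : List ℕ) (k : ℕ) : Prop :=
  ∃ b ∈ l[k]?, IsDescent X Y M b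

theorem listDes_insertIdx {M : ℕ} {l : List ℕ} (hl : ∀ a ∈ l, a < M) {k : ℕ}
    (hk : k ≤ l.length) :
    listDes X Y (l.insertIdx k M) + (if GapDescent X Y l k then 1 else 0) =
      listDes X Y l + if DescentFrom X Y M l k then 1 else 0 := by
  unfold GapDescent DescentFrom
  rcases Nat.eq_zero_or_pos k with rfl | hk0
  · simp [listDes_cons, List.head?_eq_getElem?, add_comm]
  have hsplit := listDes_append X Y (l.take k) (l.drop k)
  rw [List.take_append_drop] at hsplit
  have hprev : (l.take k).getLast? = some l[k - 1] := by
    rw [List.getLast?_take, if_neg hk0.ne', List.getElem?_eq_getElem (by omega), Option.some_or]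
  have hlast : ¬ IsDescent X Y l[k - 1] M := fun hd => hd.1.not_gt (hl _ (List.getElem_mem _))
  rw [List.insertIdx_eq_take_append_drop M l k hk, listDes_append, listDes_cons, hsplit, hprev]
  simp [List.getElem?_eq_getElem (show k - 1 < l.length by omega), hlast, hk0.ne']
  omega

theorem card_filter_gapDescent (l : List ℕ) :
    #{k ∈ range (l.length + 1) | GapDescent X Y l k} = listDes X Y l := by
  rw [listDes_eq_card, card_filter, card_filter, sum_range_succ']
  simp [GapDescent]

theorem card_filter_descentFrom {M : ℕ} {l : List ℕ} (hl : ∀ a ∈ l, a < M) :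
    #{k ∈ range (l.length + 1) | DescentFrom X Y M l k} =
      if M ∈ X then l.countP (· ∈ Y) else 0 := by
  unfold DescentFrom
  split_ifs with hM
  · rw [List.countP_eq_card_filter_range, card_filter, card_filter, sum_range_succ]
    simp only [List.getElem?_eq_none le_rfl, Option.mem_def, reduceCtorEq, false_and,
      exists_false, if_false, add_zero]
    refine sum_congr rfl fun k _ => if_congr ?_ rfl rfl
    refine exists_congr fun b => and_congr_right fun hb => ?_
    exact ⟨fun h => h.2.2, fun h => ⟨hl b (List.mem_of_getElem? hb), hM, h⟩⟩
  · simp [IsDescent, hM]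

theorem countP_permutations'Aux_listDes_of_notMem {M : ℕ} {l : List ℕ} (hl : ∀ a ∈ l, a < M)
    (hM : M ∉ X) (s : ℤ) :
    ((l.permutations'Aux M).countP (fun w => (listDes X Y w : ℤ) = s) : ℤ) =
      (if (listDes X Y l : ℤ) = s then l.length + 1 - s else 0) +
        (if (listDes X Y l : ℤ) = s + 1 then s + 1 else 0) := by
  have hins : ∀ k ∈ range (l.length + 1), (listDes X Y (l.insertIdx k M) : ℤ) =
      if GapDescent X Y l k then (listDes X Y l : ℤ) - 1 else listDes X Y l := by
    intro k hk
    have h := listDes_insertIdx X Y hl (Nat.lt_succ_iff.mp (mem_range.mp hk))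
    have hfrom : ¬ DescentFrom X Y M l k := fun ⟨_, _, hb⟩ => hM hb.2.1
    rw [if_neg hfrom, add_zero] at h
    split_ifs at h ⊢ <;> omega
  have hle : listDes X Y l ≤ l.length + 1 := by
    rw [← card_filter_gapDescent X Y l]
    exact (card_filter_le _ _).trans_eq (card_range _)
  rw [List.countP_permutations'Aux]
  simp only [decide_eq_true_eq]
  rw [filter_congr fun k hk => by rw [hins k hk], card_filter_ite_eq _ _ (by omega),
    card_filter_gapDescent, card_range]
  split_ifs <;> push_cast <;> omega

theorem countP_permutations'Aux_listDes_of_mem {M : ℕ} {l : List ℕ} (hl : ∀ a ∈ l, a < M)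
    (hM : M ∈ X) (s : ℤ) :
    ((l.permutations'Aux M).countP (fun w => (listDes X Y w : ℤ) = s) : ℤ) =
      (if (listDes X Y l : ℤ) = s then l.length + 1 - l.countP (· ∈ Y) + s else 0) +
        (if (listDes X Y l : ℤ) = s - 1 then l.countP (· ∈ Y) - s + 1 else 0) := by
  -- a gap descent ends in an entry of `Y`, and `M ∈ X` exceeds that entry
  have hGH : ∀ k, GapDescent X Y l k → DescentFrom X Y M l k :=
    fun k ⟨_, _, _, b, hb, hd⟩ => ⟨b, hb, hl b (List.mem_of_getElem? hb), hM, hd.2.2⟩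
  have hins : ∀ k ∈ range (l.length + 1), (listDes X Y (l.insertIdx k M) : ℤ) =
      if DescentFrom X Y M l k ∧ ¬ GapDescent X Y l k then (listDes X Y l : ℤ) + 1
      else listDes X Y l := by
    intro k hk
    have h := listDes_insertIdx X Y hl (Nat.lt_succ_iff.mp (mem_range.mp hk))
    have := hGH k
    split_ifs at h ⊢ <;> first | omega | tauto
  have hle : listDes X Y l ≤ l.countP (· ∈ Y) := by
    have := card_le_card (monotone_filter_right (range (l.length + 1)) fun k _ => hGH k)
    rwa [card_filter_gapDescent, card_filter_descentFrom X Y hl, if_pos hM] at this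
  have hY : l.countP (· ∈ Y) ≤ l.length := List.countP_le_length
  rw [List.countP_permutations'Aux]
  simp only [decide_eq_true_eq]
  rw [filter_congr fun k hk => by rw [hins k hk], card_filter_ite_eq _ _ (by omega),
    filter_and_not, card_sdiff_of_subset (monotone_filter_right _ fun k _ => hGH k),
    card_filter_gapDescent, card_filter_descentFrom X Y hl, if_pos hM, card_range]
  split_ifs <;> push_cast <;> omega

end Descents

section Permutations

/-- The values are listed in decreasing order so that `permutations'`, which inserts the head into
every gap of each permutation of the tail, builds permutations by inserting the largest value. -/
def permList (n : ℕ) : List (List ℕ) := (List.range' 1 n).reverse.permutations'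

theorem permList_succ (n : ℕ) :
    permList (n + 1) = (permList n).flatMap (List.permutations'Aux (n + 1)) := by
  rw [permList, List.range'_1_concat, List.reverse_append, List.reverse_singleton, Nat.add_comm]
  rfl

theorem mem_permList {n : ℕ} {l : List ℕ} : l ∈ permList n ↔ l.Perm (List.range' 1 n) := by
  rw [permList, List.mem_permutations']
  exact ⟨fun h => h.trans (List.reverse_perm _), fun h => h.trans (List.reverse_perm _).symm⟩

theorem lt_succ_of_mem_permList {n : ℕ} {l : List ℕ} (hl : l ∈ permList n) :
    ∀ a ∈ l, a < n + 1 := fun a ha => by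
  have := List.mem_range'_1.mp ((mem_permList.mp hl).subset ha)
  omega

theorem nodup_permList (n : ℕ) : (permList n).Nodup :=
  (List.permutations_perm_permutations' _).nodup_iff.mp
    (List.nodup_permutations _ (List.nodup_reverse.mpr List.nodup_range'))

theorem length_permList (n : ℕ) : (permList n).length = n.factorial := by
  rw [permList, ← (List.permutations_perm_permutations' _).length_eq, List.length_permutations,
    List.length_reverse, List.length_range']

def toList {n : ℕ} (σ : Equiv.Perm (Fin n)) : List ℕ := List.ofFn fun i => (σ i : ℕ) + 1

theorem toList_injective (n : ℕ) : Function.Injective (toList (n := n)) := fun σ τ h => by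
  ext i
  simpa using congrFun (List.ofFn_injective h) i

theorem toList_mem_permList {n : ℕ} (σ : Equiv.Perm (Fin n)) : toList σ ∈ permList n := by
  rw [mem_permList, toList, List.perm_ext_iff_of_nodup ((List.nodup_ofFn).mpr ?inj)
    List.nodup_range']
  · intro a
    simp only [List.mem_ofFn, List.mem_range'_1]
    refine ⟨fun ⟨i, hi⟩ => by omega, fun ha => ⟨σ.symm ⟨a - 1, by omega⟩, ?_⟩⟩
    simp
    omega
  · exact fun i j h => σ.injective (Fin.ext (by simpa using h))

theorem image_toList (n : ℕ) : univ.image (toList (n := n)) = (permList n).toFinset := by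
  refine eq_of_subset_of_card_le (fun l hl => ?_) ?_
  · obtain ⟨σ, -, rfl⟩ := mem_image.mp hl
    exact List.mem_toFinset.mpr (toList_mem_permList σ)
  · rw [card_image_of_injective _ (toList_injective n), card_univ, Fintype.card_perm,
      Fintype.card_fin, List.toFinset_card_of_nodup (nodup_permList n), length_permList]

variable (X Y : Set ℕ)

theorem desCount_eq_listDes {n : ℕ} (σ : Equiv.Perm (Fin n)) :
    desCount X Y n σ = listDes X Y (toList σ) := by
  rw [desCount, Set.ncard_eq_toFinset_card', Set.toFinset_ofPred, card_filter, listDes_eq_card,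
    card_filter, toList, List.length_ofFn, ← Fin.sum_univ_eq_sum_range]
  refine sum_congr rfl fun i _ => if_congr ?_ rfl rfl
  simp [List.getElem?_ofFn, IsDescent]

/-- `s` ranges over `ℤ` (the count is `0` for `s < 0`) so that the recurrences below hold for
every `s` without case distinctions. -/
noncomputable def desNum (n : ℕ) (s : ℤ) : ℕ :=
  (permList n).countP fun l => (listDes X Y l : ℤ) = s

theorem D_eq_desNum (n s : ℕ) : D X Y n s = desNum X Y n s := by
  rw [D, Nat.card_coe_set_eq, Set.ncard_eq_toFinset_card', Set.toFinset_ofPred, desNum,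
    List.countP_eq_length_filter, ← List.toFinset_card_of_nodup ((nodup_permList n).filter _),
    List.toFinset_filter, ← image_toList, filter_image,
    card_image_of_injective _ (toList_injective n)]
  simp [desCount_eq_listDes]

theorem desNum_zero (s : ℤ) : desNum X Y 0 s = if s = 0 then 1 else 0 := by
  simp [desNum, permList, listDes, eq_comm]

theorem desNum_succ_eq_sum (n : ℕ) (s : ℤ) :
    (desNum X Y (n + 1) s : ℤ) =
      ((permList n).map fun l => (((l.permutations'Aux (n + 1)).countP
        fun w => (listDes X Y w : ℤ) = s : ℕ) : ℤ)).sum := by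
  rw [desNum, permList_succ, List.countP_flatMap, Nat.cast_list_sum, List.map_map]
  rfl

theorem desNum_succ_of_notMem {n : ℕ} (h : n + 1 ∉ X) (s : ℤ) :
    (desNum X Y (n + 1) s : ℤ) =
      (n + 1 - s) * desNum X Y n s + (s + 1) * desNum X Y n (s + 1) := by
  have hterm : ∀ l ∈ permList n, (((l.permutations'Aux (n + 1)).countP
      fun w => (listDes X Y w : ℤ) = s : ℕ) : ℤ) =
      (if (listDes X Y l : ℤ) = s then n + 1 - s else 0) +
        (if (listDes X Y l : ℤ) = s + 1 then s + 1 else 0) := by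
    intro l hl
    rw [countP_permutations'Aux_listDes_of_notMem X Y (lt_succ_of_mem_permList hl) h,
      (mem_permList.mp hl).length_eq, List.length_range']
  rw [desNum_succ_eq_sum, List.map_congr_left hterm, List.sum_map_add,
    List.sum_map_ite_eq_countP_mul, List.sum_map_ite_eq_countP_mul, desNum, desNum]
  ring

theorem desNum_succ_of_mem {n : ℕ} (h : n + 1 ∈ X) (s : ℤ) :
    (desNum X Y (n + 1) s : ℤ) =
      (n + 1 - cnt Y n + s) * desNum X Y n s + (cnt Y n - s + 1) * desNum X Y n (s - 1) := by
  have hterm : ∀ l ∈ permList n, (((l.permutations'Aux (n + 1)).countP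
      fun w => (listDes X Y w : ℤ) = s : ℕ) : ℤ) =
      (if (listDes X Y l : ℤ) = s then n + 1 - cnt Y n + s else 0) +
        (if (listDes X Y l : ℤ) = s - 1 then cnt Y n - s + 1 else 0) := by
    intro l hl
    have hp := mem_permList.mp hl
    rw [countP_permutations'Aux_listDes_of_mem X Y (lt_succ_of_mem_permList hl) h,
      hp.length_eq, List.length_range', hp.countP_eq, ← cnt_eq_countP_range']
  rw [desNum_succ_eq_sum, List.map_congr_left hterm, List.sum_map_add,
    List.sum_map_ite_eq_countP_mul, List.sum_map_ite_eq_countP_mul, desNum, desNum]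
  ring

end Permutations

section Formula

/-- Vanishes for `j < 0` (empty range of summation), which keeps `altConv_succ_mul` free of case
distinctions. -/
noncomputable def altConv (N : ℕ) (Q : ℤ → ℤ) (j : ℤ) : ℤ :=
  ∑ r ∈ Icc 0 j, (-1) ^ (j - r).toNat * (N.choose (j - r).toNat : ℤ) * Q r

theorem altConv_congr {N : ℕ} {Q Q' : ℤ → ℤ} (h : ∀ r, 0 ≤ r → Q r = Q' r) (j : ℤ) :
    altConv N Q j = altConv N Q' j :=
  sum_congr rfl fun r hr => by rw [h r (mem_Icc.mp hr).1]

theorem mul_altConv (c : ℤ) (N : ℕ) (Q : ℤ → ℤ) (j : ℤ) :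
    c * altConv N Q j = altConv N (fun r => c * Q r) j := by
  rw [altConv, altConv, mul_sum]
  exact sum_congr rfl fun r _ => by ring

theorem altConv_succ_mul (N : ℕ) (e : ℤ) (Q : ℤ → ℤ) (j : ℤ) :
    altConv (N + 1) (fun r => (r + e) * Q r) j =
      (j + e) * altConv N Q j + (N + 1 - j - e) * altConv N Q (j - 1) := by
  rcases lt_or_ge j 0 with hj | hj
  · simp [altConv, Icc_eq_empty_of_lt hj, Icc_eq_empty_of_lt (show j - 1 < 0 by omega)]
  rw [altConv, altConv, altConv, ← insert_Icc_sub_one_right_eq_Icc hj, sum_insert (by simp),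
    sum_insert (by simp), mul_add, add_assoc, mul_sum, mul_sum, ← sum_add_distrib]
  simp only [sub_self, Int.toNat_zero, pow_zero, Nat.choose_zero_right, Nat.cast_one, one_mul]
  congr 1
  refine sum_congr rfl fun r hr => ?_
  obtain ⟨m, hm⟩ : ∃ m : ℕ, j - 1 - r = m := ⟨(j - 1 - r).toNat, by simp at hr; omega⟩
  rw [hm, show j - r = ((m + 1 : ℕ) : ℤ) by push_cast; omega, Int.toNat_natCast,
    Int.toNat_natCast, Nat.choose_succ_succ', pow_succ]
  have hbin : ((m + 1 : ℤ)) * N.choose (m + 1) = (N - m) * N.choose m :=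
    Nat.cast_add_one_mul_choose_add_one N m
  push_cast
  linear_combination (-1) ^ m * Q r * hbin + (-1) ^ m * Q r * (N.choose (m + 1) + N.choose m) * hm

theorem altConv_one_one (j : ℤ) : altConv 1 (fun _ => 1) j = if j = 0 then 1 else 0 := by
  rcases lt_trichotomy j 0 with hj | rfl | hj
  · simp [altConv, Icc_eq_empty_of_lt hj, hj.ne]
  · simp [altConv]
  rw [altConv, sum_eq_add (j - 1) j (by omega) ?_ (by simp; omega) (by simp; omega), if_neg hj.ne']
  · simp
  · intro r hr hne
    rw [Nat.choose_eq_zero_of_lt (by simp at hr; omega), Nat.cast_zero, mul_zero, zero_mul]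

variable (X Y : Set ℕ)

noncomputable def betaProd (n : ℕ) (r : ℤ) : ℤ :=
  ∏ x ∈ (Icc 1 n).filter (· ∈ X), (r + (betaStat X n x : ℤ) - (betaStat Y n x : ℤ))

theorem betaProd_succ_of_notMem {n : ℕ} (h : n + 1 ∉ X) (r : ℤ) :
    betaProd X Y (n + 1) r = betaProd X Y n r := by
  rw [betaProd, ← insert_Icc_right_eq_Icc_add_one (by omega), filter_insert, if_neg h]
  rfl

theorem betaProd_succ_of_mem {n : ℕ} (h : n + 1 ∈ X) (r : ℤ) :
    betaProd X Y (n + 1) r = (r + (cnt Y n - cnt X n : ℤ)) * betaProd X Y n r := by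
  rw [betaProd, ← insert_Icc_right_eq_Icc_add_one (by omega), filter_insert, if_pos h,
    prod_insert (by simp), betaStat_succ, betaStat_succ, Nat.cast_sub (cnt_le X n),
    Nat.cast_sub (cnt_le Y n)]
  congr 1
  ring

noncomputable def weight (c n : ℕ) (r : ℤ) : ℤ :=
  ((c + r.toNat).choose r.toNat : ℤ) * betaProd X Y n r

theorem weight_succ_left (c n : ℕ) {r : ℤ} (hr : 0 ≤ r) :
    (c + 1 : ℤ) * weight X Y (c + 1) n r = (r + (c + 1)) * weight X Y c n r := by
  obtain ⟨t, rfl⟩ := Int.eq_ofNat_of_zero_le hr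
  rw [weight, weight, Int.toNat_natCast, ← mul_assoc, ← mul_assoc]
  congr 1
  exact_mod_cast (Nat.add_one_mul_choose_add_one_add c t).trans (by ring)

theorem weight_succ_right_of_notMem (c : ℕ) {n : ℕ} (h : n + 1 ∉ X) :
    weight X Y c (n + 1) = weight X Y c n := by
  funext r
  rw [weight, weight, betaProd_succ_of_notMem X Y h]

theorem weight_succ_right_of_mem (c : ℕ) {n : ℕ} (h : n + 1 ∈ X) (r : ℤ) :
    weight X Y c (n + 1) r = (r + (cnt Y n - cnt X n : ℤ)) * weight X Y c n r := by
  rw [weight, weight, betaProd_succ_of_mem X Y h]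
  ring

noncomputable def desFormula (n : ℕ) (s : ℤ) : ℤ :=
  ((n - cnt X n).factorial : ℤ) * altConv (n + 1) (weight X Y (n - cnt X n) n) (cnt X n - s)

theorem desFormula_zero (s : ℤ) : desFormula X Y 0 s = if s = 0 then 1 else 0 := by
  have hw : weight X Y (0 - cnt X 0) 0 = fun _ => 1 := by
    funext r
    simp [weight, betaProd]
  rw [desFormula, hw, altConv_one_one]
  simp [cnt_eq_card]

theorem desFormula_succ_of_notMem {n : ℕ} (h : n + 1 ∉ X) (s : ℤ) :
    desFormula X Y (n + 1) s =
      (n + 1 - s) * desFormula X Y n s + (s + 1) * desFormula X Y n (s + 1) := by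
  have ha : cnt X (n + 1) = cnt X n := by simp [cnt_succ, h]
  obtain ⟨c, hc⟩ : ∃ c, n = cnt X n + c := ⟨n - cnt X n, by have := cnt_le X n; omega⟩
  have key : (c + 1 : ℤ) * altConv (n + 1 + 1) (weight X Y (c + 1) n) (cnt X n - s) =
      (cnt X n - s + (c + 1)) * altConv (n + 1) (weight X Y c n) (cnt X n - s) +
        ((n + 1 : ℕ) + 1 - (cnt X n - s) - (c + 1)) *
          altConv (n + 1) (weight X Y c n) (cnt X n - (s + 1)) := by
    rw [mul_altConv, altConv_congr fun r hr => weight_succ_left X Y c n hr, altConv_succ_mul,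
      sub_sub _ s 1]
  have hfac : ((c + 1).factorial : ℤ) = (c + 1) * c.factorial := by
    push_cast [Nat.factorial_succ]
    ring
  have hc' : (n : ℤ) = cnt X n + c := by exact_mod_cast hc
  rw [desFormula, desFormula, desFormula, ha, show n + 1 - cnt X n = c + 1 by omega,
    show n - cnt X n = c by omega, weight_succ_right_of_notMem X Y _ h, hfac]
  push_cast at key
  rw [hc'] at key ⊢
  linear_combination (c.factorial : ℤ) * key

theorem desFormula_succ_of_mem {n : ℕ} (h : n + 1 ∈ X) (s : ℤ) :
    desFormula X Y (n + 1) s =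
      (n + 1 - cnt Y n + s) * desFormula X Y n s +
        (cnt Y n - s + 1) * desFormula X Y n (s - 1) := by
  have ha : cnt X (n + 1) = cnt X n + 1 := by simp [cnt_succ, h]
  have hw : weight X Y (n - cnt X n) (n + 1) =
      fun r => (r + (cnt Y n - cnt X n : ℤ)) * weight X Y (n - cnt X n) n r :=
    funext (weight_succ_right_of_mem X Y _ h)
  rw [desFormula, desFormula, desFormula, ha, show n + 1 - (cnt X n + 1) = n - cnt X n by omega,
    hw, show ((cnt X n + 1 : ℕ) : ℤ) - s = cnt X n - (s - 1) by push_cast; ring,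
    altConv_succ_mul, show (cnt X n : ℤ) - (s - 1) - 1 = cnt X n - s by ring]
  push_cast
  ring

end Formula

theorem desNum_eq_desFormula (X Y : Set ℕ) (n : ℕ) (s : ℤ) :
    (desNum X Y n s : ℤ) = desFormula X Y n s := by
  induction n generalizing s with
  | zero =>
    rw [desNum_zero, desFormula_zero]
    split_ifs <;> rfl
  | succ n ih =>
    by_cases h : n + 1 ∈ X
    · rw [desNum_succ_of_mem X Y h, desFormula_succ_of_mem X Y h, ih, ih]
    · rw [desNum_succ_of_notMem X Y h, desFormula_succ_of_notMem X Y h, ih, ih]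

end HallRemmel

theorem HR_formula_two_general (X Y : Set ℕ) (n s : ℕ) :
    (D X Y n s : ℤ) =
      ((n - cnt X n).factorial : ℤ) *
        ∑ r ∈ Finset.Icc (0 : ℤ) ((cnt X n : ℤ) - (s : ℤ)),
          (-1 : ℤ) ^ ((cnt X n : ℤ) - (s : ℤ) - r).toNat *
            ((n - cnt X n + r.toNat).choose r.toNat : ℤ) *
            ((n + 1).choose ((cnt X n : ℤ) - (s : ℤ) - r).toNat : ℤ) *
            ∏ x ∈ (Finset.Icc 1 n).filter (· ∈ X),
              (r + (betaStat X n x : ℤ) - (betaStat Y n x : ℤ)) := by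
  rw [HallRemmel.D_eq_desNum, HallRemmel.desNum_eq_desFormula, HallRemmel.desFormula,
    HallRemmel.altConv]
  congr 1
  refine Finset.sum_congr rfl fun r _ => ?_
  rw [HallRemmel.weight, HallRemmel.betaProd]
  ring

/-- Theorem 4 (Hall–Remmel): for all `X, Y ⊆ ℕ₊`, `n ≥ 1`, `s ≥ 0`,
`D_{n,s}^{X,Y} = x_n^c! ∑_{r=0}^{x_n - s} (-1)^{x_n-s-r} C(x_n^c + r, r) C(n+1, x_n-s-r)
∏_{x ∈ X_n} (r + β_{X,n,x} - β_{Y,n,x})` (an identity of integers; the sum is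
empty when `x_n - s < 0`). -/
theorem HR_formula_two (X Y : Set ℕ) (hX : 0 ∉ X) (hY : 0 ∉ Y) (n s : ℕ) (hn : 1 ≤ n) :
    (D X Y n s : ℤ) =
      ((n - cnt X n).factorial : ℤ) *
        ∑ r ∈ Finset.Icc (0 : ℤ) ((cnt X n : ℤ) - (s : ℤ)),
          (-1 : ℤ) ^ ((cnt X n : ℤ) - (s : ℤ) - r).toNat *
            ((n - cnt X n + r.toNat).choose r.toNat : ℤ) *
            ((n + 1).choose ((cnt X n : ℤ) - (s : ℤ) - r).toNat : ℤ) *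
            ∏ x ∈ (Finset.Icc 1 n).filter (· ∈ X),
              (r + (betaStat X n x : ℤ) - (betaStat Y n x : ℤ)) :=
  HR_formula_two_general X Y n s
end

section
/- Let X, Y be subsets of the positive integers and n ≥ 1 an integer with n+1 ∈ X ∩ Y. Then for all k ≥ 0, A_{n+1,k}^{X,Y} = (x_n + y_n − (k−1)) · A_{n,k−1}^{X,Y} + (n+1 − (x_n + y_n − k)) · A_{n,k}^{X,Y}, where the term with A_{n,k−1}^{X,Y} is omitted when k = 0. -/
/-- `adj_{X,Y}(σ)`: number of `i` with `σ_i ∈ X` and `σ_{i+1} ∈ Y`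
(positions and values of `Fin n` are identified with `{1, ..., n}` via `i ↦ i + 1`). -/
noncomputable def adjCount (X Y : Set ℕ) (n : ℕ) (σ : Equiv.Perm (Fin n)) : ℕ :=
  {i : Fin n | ∃ h : (i : ℕ) + 1 < n,
    ((σ i : ℕ) + 1) ∈ X ∧ ((σ ⟨(i : ℕ) + 1, h⟩ : ℕ) + 1) ∈ Y}.ncard

/-- `A_{n,s}^{X,Y}`: the number of permutations of `[n]` with exactly `s`
`(X,Y)`-adjacencies. -/
noncomputable def A (X Y : Set ℕ) (n s : ℕ) : ℕ :=
  Nat.card {σ : Equiv.Perm (Fin n) | adjCount X Y n σ = s}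

open Finset Equiv

theorem List.ofFn_insertNth {α : Type*} {n : ℕ} (p : Fin (n + 1)) (a : α) (f : Fin n → α) :
    List.ofFn (p.insertNth a f) = (List.ofFn f).insertIdx p a := by
  induction n with
  | zero => obtain rfl := Fin.fin_one_eq_zero p; simp [Fin.insertNth_zero']
  | succ n ih =>
    cases p using Fin.cases with
    | zero => simp [Fin.insertNth_zero']
    | succ p =>
      rw [← Fin.cons_self_tail f, Fin.insertNth_succ_cons, List.ofFn_cons, List.ofFn_cons, ih]
      rfl

lemma card_filter_add_ite_eq {ι : Type*} (s : Finset ι) (G : ι → Prop) [DecidablePred G]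
    (a k : ℕ) :
    #{i ∈ s | a + (if G i then 1 else 0) = k} =
      (if a = k then #{i ∈ s | ¬G i} else 0) + (if a + 1 = k then #{i ∈ s | G i} else 0) := by
  by_cases hk : a = k
  · subst hk
    simp
  by_cases hk' : a + 1 = k
  · subst hk'
    simp
  simp only [hk, hk', if_false, add_zero, card_eq_zero, filter_eq_empty_iff]
  intro i _
  split_ifs <;> omega

section Lists

open scoped Classical

variable (X Y : Set ℕ)

noncomputable def listAdj : List ℕ → ℕ
  | a :: b :: l => (if a ∈ X ∧ b ∈ Y then 1 else 0) + listAdj (b :: l)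
  | _ => 0

/-- Gap `p` of `l` lies between `l[p - 1]` and `l[p]`; inserting an element of `X ∩ Y` there
adds one `(X, Y)`-adjacency exactly when this holds, and none otherwise. -/
def CreatesAdj (l : List ℕ) (p : ℕ) : Prop :=
  (0 < p ∧ ∃ a ∈ l[p - 1]?, a ∈ X) ∨ ∃ b ∈ l[p]?, b ∈ Y

variable {X Y}

@[simp] lemma listAdj_nil : listAdj X Y [] = 0 := rfl

@[simp] lemma listAdj_singleton (a : ℕ) : listAdj X Y [a] = 0 := rfl

lemma listAdj_cons (a : ℕ) (l : List ℕ) :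
    listAdj X Y (a :: l) = (if a ∈ X ∧ ∃ b ∈ l.head?, b ∈ Y then 1 else 0) + listAdj X Y l := by
  cases l <;> simp [listAdj]

lemma listAdj_insertIdx {m : ℕ} (hm : m ∈ X ∩ Y) (l : List ℕ) {p : ℕ} (hp : p ≤ l.length) :
    listAdj X Y (l.insertIdx p m) = listAdj X Y l + if CreatesAdj X Y l p then 1 else 0 := by
  induction l generalizing p with
  | nil =>
    obtain rfl : p = 0 := by simpa using hp
    simp [CreatesAdj]
  | cons a l ih =>
    cases p with
    | zero => simp [listAdj_cons, CreatesAdj, hm.1]; omega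
    | succ p =>
      rw [List.insertIdx_succ_cons, listAdj_cons, listAdj_cons, ih (by simpa using hp)]
      cases p with
      | zero =>
        by_cases ha : a ∈ X
        · simp [CreatesAdj, ha, hm.2, List.head?_eq_getElem?]; omega
        · simp [CreatesAdj, ha]
      | succ p =>
        cases l with
        | nil => simp at hp
        | cons b l => simp [CreatesAdj]; omega

lemma card_createsAdj_add_listAdj (l : List ℕ) :
    #{p ∈ range (l.length + 1) | CreatesAdj X Y l p} + listAdj X Y l =
      l.countP (· ∈ X) + l.countP (· ∈ Y) := by
  induction l with
  | nil => simp [CreatesAdj]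
  | cons a l ih =>
    rw [card_filter, sum_range_succ'] at ih
    rw [card_filter, List.length_cons, sum_range_succ', sum_range_succ']
    have hshift : ∀ q, CreatesAdj X Y (a :: l) (q + 2) ↔ CreatesAdj X Y l (q + 1) := by
      intro q; simp [CreatesAdj]
    simp only [hshift, listAdj_cons, List.countP_cons]
    by_cases ha : a ∈ X <;> by_cases hb : a ∈ Y <;>
      simp [CreatesAdj, ha, hb, List.head?_eq_getElem?] at ih ⊢ <;> omega

lemma ncard_adjacent_eq_listAdj {n : ℕ} (w : Fin n → ℕ) :
    {i : Fin n | ∃ h : (i : ℕ) + 1 < n, w i ∈ X ∧ w ⟨i + 1, h⟩ ∈ Y}.ncard =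
      listAdj X Y (List.ofFn w) := by
  induction n with
  | zero => simp
  | succ n ih =>
    have ih := ih (fun i => w i.succ)
    rw [Set.ncard_eq_toFinset_card', Set.toFinset_ofPred, card_filter] at ih ⊢
    rw [Fin.sum_univ_succ, List.ofFn_succ, listAdj_cons, ← ih]
    congr 1
    · cases n with
      | zero =>
        rw [if_neg (fun ⟨h, _⟩ => absurd h (by simp)), if_neg (by simp)]
      | succ n =>
        simp only [List.ofFn_succ, List.head?_cons, Option.mem_def, Option.some.injEq,
          exists_eq_left']
        refine if_congr ⟨fun ⟨_, hx, hy⟩ => ⟨hx, hy⟩, fun ⟨hx, hy⟩ => ⟨by simp, hx, hy⟩⟩ rfl rfl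
    · refine Fintype.sum_congr _ _ fun i => if_congr ?_ rfl rfl
      exact ⟨fun ⟨h, hx, hy⟩ => ⟨by simpa using h, hx, hy⟩,
        fun ⟨h, hx, hy⟩ => ⟨by simpa using h, hx, hy⟩⟩

end Lists

section Perm

variable {n : ℕ}

def permWord (σ : Perm (Fin n)) : List ℕ := List.ofFn fun i => (σ i : ℕ) + 1

lemma countP_permWord (σ : Perm (Fin n)) (Z : Set ℕ) [DecidablePred (· ∈ Z)] :
    (permWord σ).countP (· ∈ Z) = cnt Z n := by
  have hperm : (permWord σ).Perm (List.range' 1 n) := by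
    refine (σ.ofFn_comp_perm fun i => (i : ℕ) + 1).trans (.of_eq ?_)
    apply List.ext_getElem <;> simp [add_comm]
  have hset : Z ∩ Set.Icc 1 n = ↑({v ∈ Finset.Icc 1 n | v ∈ Z} : Finset ℕ) := by
    ext v; simp only [Set.mem_inter_iff, Set.mem_Icc, coe_filter, Finset.mem_Icc, Set.mem_ofPred_eq]; tauto
  rw [hperm.countP_eq, cnt, hset, Set.ncard_coe_finset, Finset.card_def, Finset.filter_val,
    Nat.Icc_eq_range', Multiset.filter_coe, Multiset.coe_card, List.countP_eq_length_filter]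
  simp

def insertLast (σ : Perm (Fin n)) (p : Fin (n + 1)) : Perm (Fin (n + 1)) :=
  (finSuccEquiv' p).trans (σ.optionCongr.trans (finSuccEquiv' (Fin.last n)).symm)

lemma coe_insertLast (σ : Perm (Fin n)) (p : Fin (n + 1)) :
    ⇑(insertLast σ p) = p.insertNth (Fin.last n) (Fin.castSucc ∘ σ) := by
  rw [Fin.eq_insertNth_iff]
  refine ⟨by simp [insertLast], funext fun j => by simp [insertLast, Fin.removeNth]⟩

lemma insertLast_apply_self (σ : Perm (Fin n)) (p : Fin (n + 1)) :
    insertLast σ p p = Fin.last n := by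
  simp [coe_insertLast]

lemma permWord_insertLast (σ : Perm (Fin n)) (p : Fin (n + 1)) :
    permWord (insertLast σ p) = (permWord σ).insertIdx p (n + 1) := by
  rw [permWord, permWord, ← List.ofFn_insertNth]
  congr 1
  funext i
  cases i using Fin.succAboveCases p <;> simp [coe_insertLast]

lemma insertLast_injective :
    Function.Injective fun x : Perm (Fin n) × Fin (n + 1) => insertLast x.1 x.2 := by
  rintro ⟨σ, p⟩ ⟨τ, q⟩ h
  simp only at h
  obtain rfl : p = q := (insertLast τ q).injective <| by
    rw [insertLast_apply_self, ← h, insertLast_apply_self]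
  refine Prod.ext (Equiv.ext fun j => Fin.castSucc_injective _ ?_) rfl
  simpa [coe_insertLast] using congrFun (congrArg DFunLike.coe h) (p.succAbove j)

noncomputable def insertLastEquiv (n : ℕ) : Perm (Fin n) × Fin (n + 1) ≃ Perm (Fin (n + 1)) :=
  Equiv.ofBijective _ <| (Fintype.bijective_iff_injective_and_card _).2
    ⟨insertLast_injective, by simp [Fintype.card_perm, Nat.factorial_succ, mul_comm]⟩

end Perm

section Counting

open scoped Classical

lemma A_eq_card (X Y : Set ℕ) (n s : ℕ) : A X Y n s = #{σ | adjCount X Y n σ = s} := by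
  rw [A, Nat.card_coe_set_eq, Set.ncard_eq_toFinset_card', Set.toFinset_ofPred]

lemma A_succ_eq_sum (X Y : Set ℕ) (n k : ℕ) :
    A X Y (n + 1) k = ∑ σ : Perm (Fin n), #{p | adjCount X Y (n + 1) (insertLast σ p) = k} := by
  rw [A_eq_card, card_filter, ← (insertLastEquiv n).sum_comp, Fintype.sum_prod_type]
  simp_rw [card_filter]
  rfl

variable {X Y : Set ℕ} {n : ℕ}

lemma adjCount_eq_listAdj (σ : Perm (Fin n)) : adjCount X Y n σ = listAdj X Y (permWord σ) :=
  ncard_adjacent_eq_listAdj _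

lemma adjCount_insertLast (h : n + 1 ∈ X ∩ Y) (σ : Perm (Fin n)) (p : Fin (n + 1)) :
    adjCount X Y (n + 1) (insertLast σ p) =
      adjCount X Y n σ + if CreatesAdj X Y (permWord σ) p then 1 else 0 := by
  rw [adjCount_eq_listAdj, adjCount_eq_listAdj, permWord_insertLast,
    listAdj_insertIdx h _ (by simpa [permWord] using p.is_le)]

lemma card_createsAdj_add_adjCount (σ : Perm (Fin n)) :
    #{p : Fin (n + 1) | CreatesAdj X Y (permWord σ) p} + adjCount X Y n σ = cnt X n + cnt Y n := by
  rw [adjCount_eq_listAdj, ← countP_permWord σ X, ← countP_permWord σ Y,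
    ← card_createsAdj_add_listAdj, card_filter, card_filter,
    Fin.sum_univ_eq_sum_range (fun p => if CreatesAdj X Y (permWord σ) p then 1 else 0)]
  simp [permWord]

lemma card_adjCount_insertLast (h : n + 1 ∈ X ∩ Y) (σ : Perm (Fin n)) (k : ℕ) :
    (#{p | adjCount X Y (n + 1) (insertLast σ p) = k} : ℤ) =
      (if adjCount X Y n σ = k then (n : ℤ) + 1 - (cnt X n + cnt Y n - k) else 0) +
      (if adjCount X Y n σ + 1 = k then (cnt X n : ℤ) + cnt Y n - (k - 1) else 0) := by
  have hgain := card_createsAdj_add_adjCount (X := X) (Y := Y) σ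
  have hsplit := card_filter_add_card_filter_not (s := univ)
    (fun p : Fin (n + 1) => CreatesAdj X Y (permWord σ) p)
  simp only [adjCount_insertLast h, card_filter_add_ite_eq, card_univ, Fintype.card_fin]
    at hsplit ⊢
  split_ifs <;> push_cast <;> omega

end Counting

theorem A_rec_case2_general (X Y : Set ℕ) (n : ℕ)
    (h : n + 1 ∈ X ∩ Y) (k : ℕ) :
    (A X Y (n + 1) k : ℤ) =
      (if k = 0 then 0 else
        ((cnt X n : ℤ) + (cnt Y n : ℤ) - ((k : ℤ) - 1)) * (A X Y n (k - 1) : ℤ)) +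
        ((n : ℤ) + 1 - ((cnt X n : ℤ) + (cnt Y n : ℤ) - (k : ℤ))) * (A X Y n k : ℤ) := by
  rw [A_succ_eq_sum]
  push_cast
  simp only [card_adjCount_insertLast h, sum_add_distrib, sum_ite, sum_const_zero, sum_const, add_zero, nsmul_eq_mul,
    ← A_eq_card]
  rcases k with _ | k
  · simp [mul_comm]
  · simp [← A_eq_card]
    ring

/-- Recurrence for `A_{n,k}^{X,Y}` when `n+1 ∈ X ∩ Y`:
`A_{n+1,k} = (x_n + y_n - (k-1)) A_{n,k-1} + (n+1 - (x_n + y_n - k)) A_{n,k}`,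
the first term being omitted when `k = 0`. -/
theorem A_rec_case2 (X Y : Set ℕ) (hX : 0 ∉ X) (hY : 0 ∉ Y) (n : ℕ) (hn : 1 ≤ n)
    (h : n + 1 ∈ X ∩ Y) (k : ℕ) :
    (A X Y (n + 1) k : ℤ) =
      (if k = 0 then 0 else
        ((cnt X n : ℤ) + (cnt Y n : ℤ) - ((k : ℤ) - 1)) * (A X Y n (k - 1) : ℤ)) +
        ((n : ℤ) + 1 - ((cnt X n : ℤ) + (cnt Y n : ℤ) - (k : ℤ))) * (A X Y n k : ℤ) :=
  A_rec_case2_general X Y n h k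
end

section
/- Let X, Y be subsets of the positive integers and n ≥ 1 an integer with n+1 ∈ X − Y. Then for all k ≥ 0, A_{n+1,k}^{X,Y} = (y_n − (k−1)) · A_{n,k−1}^{X,Y} + (n+1 − (y_n − k)) · A_{n,k}^{X,Y}, where the term with A_{n,k−1}^{X,Y} is omitted when k = 0. -/
/-!
Every permutation of `[n+1]` arises exactly once by inserting the value `n+1` into one of the
`n+1` slots of a permutation `τ` of `[n]`. Since `n+1 ∈ X \ Y`, the inserted entry never ends an
adjacency and starts one exactly when it is followed by a `Y`-entry. Inserting it between an
adjacent pair `x y` of `τ` therefore trades that adjacency for `(n+1) y`, while inserting it in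
front of a `Y`-entry that does not follow an `X`-entry creates a new one; elsewhere nothing
changes. There are `y_n - adj τ` slots of the second kind, which gives the recurrence.
-/

namespace AdjacencyRecurrence

open Finset Equiv

lemma val_succAbove {n : ℕ} (p : Fin (n + 1)) (i : Fin n) :
    (p.succAbove i : ℕ) = if (i : ℕ) < p then (i : ℕ) else (i : ℕ) + 1 := by
  unfold Fin.succAbove
  split_ifs <;> simp_all [Fin.lt_def]

section Insertion

variable {n : ℕ}

def insertMaxFun (p : Fin (n + 1)) (τ : Perm (Fin n)) : Fin (n + 1) → Fin (n + 1) :=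
  p.insertNth (α := fun _ => Fin (n + 1)) (Fin.last n) fun i => (τ i).castSucc

@[simp] lemma insertMaxFun_self (p : Fin (n + 1)) (τ : Perm (Fin n)) :
    insertMaxFun p τ p = Fin.last n :=
  Fin.insertNth_apply_same _ _ _

@[simp] lemma insertMaxFun_succAbove (p : Fin (n + 1)) (τ : Perm (Fin n)) (i : Fin n) :
    insertMaxFun p τ (p.succAbove i) = (τ i).castSucc :=
  Fin.insertNth_apply_succAbove _ _ _ _

lemma insertMaxFun_injective (p : Fin (n + 1)) (τ : Perm (Fin n)) :
    Function.Injective (insertMaxFun p τ) := by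
  intro r s hrs
  rcases p.eq_self_or_eq_succAbove r with hr | ⟨i, hr⟩ <;>
    rcases p.eq_self_or_eq_succAbove s with hs | ⟨j, hs⟩ <;> subst hr hs <;>
    simp_all [(Fin.castSucc_ne_last _).symm, Fin.castSucc_ne_last]

noncomputable def insertMax (p : Fin (n + 1)) (τ : Perm (Fin n)) : Perm (Fin (n + 1)) :=
  Equiv.ofBijective _ (Finite.injective_iff_bijective.mp (insertMaxFun_injective p τ))

@[simp] lemma insertMax_self (p : Fin (n + 1)) (τ : Perm (Fin n)) :
    insertMax p τ p = Fin.last n :=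
  insertMaxFun_self p τ

@[simp] lemma insertMax_succAbove (p : Fin (n + 1)) (τ : Perm (Fin n)) (i : Fin n) :
    insertMax p τ (p.succAbove i) = (τ i).castSucc :=
  insertMaxFun_succAbove p τ i

lemma insertMax_injective :
    Function.Injective fun x : Fin (n + 1) × Perm (Fin n) => insertMax x.1 x.2 := by
  rintro ⟨p, τ⟩ ⟨q, ρ⟩ h
  simp only at h
  obtain rfl : p = q := by
    rcases q.eq_self_or_eq_succAbove p with hp | ⟨i, rfl⟩
    · exact hp
    · simpa [Fin.castSucc_ne_last] using congr($h (q.succAbove i)).symm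
  congr
  ext i
  simpa using congr(($h (p.succAbove i) : ℕ))

lemma insertMax_bijective :
    Function.Bijective fun x : Fin (n + 1) × Perm (Fin n) => insertMax x.1 x.2 := by
  refine (Fintype.bijective_iff_injective_and_card _).mpr ⟨insertMax_injective, ?_⟩
  simp only [Fintype.card_prod, Fintype.card_fin, Fintype.card_perm, Nat.factorial_succ]

end Insertion

lemma A_eq_sum (X Y : Set ℕ) (n k : ℕ) :
    A X Y n k = ∑ σ : Perm (Fin n), if adjCount X Y n σ = k then 1 else 0 := by
  classical
  rw [A, Nat.card_eq_fintype_card, Fintype.card_subtype, card_filter]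
  rfl

lemma A_succ_eq_sum (X Y : Set ℕ) (n k : ℕ) :
    A X Y (n + 1) k = ∑ τ : Perm (Fin n), ∑ p : Fin (n + 1),
      if adjCount X Y (n + 1) (insertMax p τ) = k then 1 else 0 := by
  rw [A_eq_sum, ← insertMax_bijective.sum_comp, Fintype.sum_prod_type_right]

section Adjacency

open scoped Classical

variable (X Y : Set ℕ)

/-- An `(X,Y)`-adjacency is recorded at its right endpoint `i`; values carry the `+ 1` shift of
`adjCount`. -/
def PrecededBy {m : ℕ} (σ : Perm (Fin m)) (i : Fin m) : Prop :=
  ∃ j : Fin m, (j : ℕ) + 1 = i ∧ (σ j : ℕ) + 1 ∈ X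

lemma adjCount_eq_card {m : ℕ} (σ : Perm (Fin m)) :
    adjCount X Y m σ = #{i | (σ i : ℕ) + 1 ∈ Y ∧ PrecededBy X σ i} := by
  rw [adjCount, ← Set.ncard_coe_finset]
  refine Set.ncard_congr (fun i hi => ⟨i + 1, hi.1⟩) ?_ ?_ ?_
  · rintro i ⟨hi, hX, hY⟩
    simpa using ⟨hY, i, rfl, hX⟩
  · intro i j _ _ hij
    simpa [Fin.ext_iff] using hij
  · rintro r hr
    simp only [coe_filter, mem_univ, true_and, Set.mem_ofPred_eq] at hr
    obtain ⟨hY, j, hj, hX⟩ := hr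
    have hr : (⟨j + 1, by omega⟩ : Fin m) = r := Fin.ext hj
    exact ⟨j, ⟨by omega, hX, hr ▸ hY⟩, hr⟩

variable {X Y} {n : ℕ}

lemma precededBy_insertMax_succAbove (hX : n + 1 ∈ X) (p : Fin (n + 1)) (τ : Perm (Fin n))
    (i : Fin n) :
    PrecededBy X (insertMax p τ) (p.succAbove i) ↔ i.castSucc = p ∨ PrecededBy X τ i := by
  have hi := val_succAbove p i
  constructor
  · rintro ⟨j, hj, hjX⟩
    rcases p.eq_self_or_eq_succAbove j with rfl | ⟨j, rfl⟩
    · left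
      ext
      split_ifs at hi <;> simp <;> omega
    · right
      refine ⟨j, ?_, by simpa using hjX⟩
      have hj' := val_succAbove p j
      split_ifs at hi hj' <;> omega
  · intro h
    by_cases hip : i.castSucc = p
    · subst hip
      exact ⟨i.castSucc, by simp, by simpa using hX⟩
    · obtain ⟨j, hj, hjX⟩ := h.resolve_left hip
      refine ⟨p.succAbove j, ?_, by simpa using hjX⟩
      have hj' := val_succAbove p j
      have hip' : (i : ℕ) ≠ p := fun h' => hip (Fin.ext h')
      split_ifs at hi hj' <;> omega

lemma adjCount_insertMax (h : n + 1 ∈ X \ Y) (p : Fin (n + 1)) (τ : Perm (Fin n)) :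
    adjCount X Y (n + 1) (insertMax p τ) =
      #{i | (τ i : ℕ) + 1 ∈ Y ∧ (i.castSucc = p ∨ PrecededBy X τ i)} := by
  rw [adjCount_eq_card, card_filter, card_filter, Fin.sum_univ_succAbove _ p]
  simp [precededBy_insertMax_succAbove h.1, h.2]

variable (X Y) in
/-- The slots in front of which inserting `n+1` creates an adjacency. -/
noncomputable def unprecededY (τ : Perm (Fin n)) : Finset (Fin n) :=
  {i | (τ i : ℕ) + 1 ∈ Y ∧ ¬PrecededBy X τ i}

lemma adjCount_insertMax_last (h : n + 1 ∈ X \ Y) (τ : Perm (Fin n)) :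
    adjCount X Y (n + 1) (insertMax (Fin.last n) τ) = adjCount X Y n τ := by
  simp [adjCount_insertMax h, adjCount_eq_card, Fin.castSucc_ne_last]

lemma adjCount_insertMax_castSucc (h : n + 1 ∈ X \ Y) (τ : Perm (Fin n)) (i₀ : Fin n) :
    adjCount X Y (n + 1) (insertMax i₀.castSucc τ) =
      adjCount X Y n τ + if i₀ ∈ unprecededY X Y τ then 1 else 0 := by
  rw [adjCount_insertMax h, adjCount_eq_card, card_filter, card_filter]
  calc _ = ∑ i, ((if (τ i : ℕ) + 1 ∈ Y ∧ PrecededBy X τ i then 1 else 0) +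
        if i = i₀ then (if i₀ ∈ unprecededY X Y τ then 1 else 0) else 0) := by
        refine sum_congr rfl fun i _ => ?_
        by_cases hi : i = i₀
        · subst hi
          by_cases hP : PrecededBy X τ i <;> simp [unprecededY, hP]
        · simp [hi]
    _ = _ := by rw [sum_add_distrib, sum_ite_eq', if_pos (mem_univ _)]

lemma card_filter_perm_mem (τ : Perm (Fin n)) : #{i | (τ i : ℕ) + 1 ∈ Y} = cnt Y n := by
  rw [cnt, ← Set.ncard_coe_finset]
  refine Set.ncard_congr (fun i _ => (τ i : ℕ) + 1) ?_ ?_ ?_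
  · intro i hi
    simp only [coe_filter, mem_univ, true_and, Set.mem_ofPred_eq] at hi
    exact ⟨hi, by simp, by omega⟩
  · intro i j _ _ hij
    exact τ.injective (Fin.ext (by omega))
  · rintro v ⟨hvY, hv1, hvn⟩
    refine ⟨τ.symm ⟨v - 1, by omega⟩, ?_, ?_⟩ <;> simp [Nat.sub_add_cancel hv1, hvY]

lemma card_unprecededY_add_adjCount (τ : Perm (Fin n)) :
    #(unprecededY X Y τ) + adjCount X Y n τ = cnt Y n := by
  rw [adjCount_eq_card, unprecededY, ← card_filter_perm_mem τ,
    ← card_filter_add_card_filter_not (s := {i | (τ i : ℕ) + 1 ∈ Y}) (PrecededBy X τ), add_comm]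
  simp only [filter_filter]

lemma sum_insertMax_indicator (h : n + 1 ∈ X \ Y) (τ : Perm (Fin n)) (k : ℕ) :
    (∑ p : Fin (n + 1), if adjCount X Y (n + 1) (insertMax p τ) = k then 1 else 0 : ℤ) =
      (if adjCount X Y n τ = k then (n : ℤ) + 1 - ((cnt Y n : ℤ) - k) else 0) +
        if adjCount X Y n τ + 1 = k then (cnt Y n : ℤ) - ((k : ℤ) - 1) else 0 := by
  simp only [Fin.sum_univ_castSucc, adjCount_insertMax_castSucc h, adjCount_insertMax_last h]
  set a := adjCount X Y n τ
  have hcard := card_unprecededY_add_adjCount (X := X) (Y := Y) τ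
  have hterm (i : Fin n) :
      (if a + (if i ∈ unprecededY X Y τ then 1 else 0) = k then 1 else 0 : ℤ) =
        (if a = k then 1 else 0) +
          if i ∈ unprecededY X Y τ then
            (if a + 1 = k then 1 else 0) - (if a = k then 1 else 0) else 0 := by
    split_ifs <;> omega
  simp only [hterm, sum_add_distrib, Fintype.sum_ite_mem, sum_const, card_univ, Fintype.card_fin]
  split_ifs <;> simp only [nsmul_eq_mul] <;> push_cast <;> omega

end Adjacency

lemma sum_ite_adjCount_eq (X Y : Set ℕ) (n k : ℕ) (c : ℤ) :
    (∑ τ : Perm (Fin n), if adjCount X Y n τ = k then c else 0) = c * A X Y n k := by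
  rw [A_eq_sum, Nat.cast_sum, mul_sum]
  refine sum_congr rfl fun τ _ => ?_
  split_ifs <;> simp

end AdjacencyRecurrence

theorem A_rec_case3_general (X Y : Set ℕ) (n : ℕ)
    (h : n + 1 ∈ X \ Y) (k : ℕ) :
    (A X Y (n + 1) k : ℤ) =
      (if k = 0 then 0 else
        ((cnt Y n : ℤ) - ((k : ℤ) - 1)) * (A X Y n (k - 1) : ℤ)) +
        ((n : ℤ) + 1 - ((cnt Y n : ℤ) - (k : ℤ))) * (A X Y n k : ℤ) := by
  rw [AdjacencyRecurrence.A_succ_eq_sum]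
  push_cast
  simp only [AdjacencyRecurrence.sum_insertMax_indicator h, Finset.sum_add_distrib,
    AdjacencyRecurrence.sum_ite_adjCount_eq]
  rw [add_comm]
  congr 1
  cases k with
  | zero => simp
  | succ k => simp [AdjacencyRecurrence.sum_ite_adjCount_eq]

/-- Recurrence for `A_{n,k}^{X,Y}` when `n+1 ∈ X - Y`:
`A_{n+1,k} = (y_n - (k-1)) A_{n,k-1} + (n+1 - (y_n - k)) A_{n,k}`,
the first term being omitted when `k = 0`. -/
theorem A_rec_case3 (X Y : Set ℕ) (hX : 0 ∉ X) (hY : 0 ∉ Y) (n : ℕ) (hn : 1 ≤ n)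
    (h : n + 1 ∈ X \ Y) (k : ℕ) :
    (A X Y (n + 1) k : ℤ) =
      (if k = 0 then 0 else
        ((cnt Y n : ℤ) - ((k : ℤ) - 1)) * (A X Y n (k - 1) : ℤ)) +
        ((n : ℤ) + 1 - ((cnt Y n : ℤ) - (k : ℤ))) * (A X Y n k : ℤ) :=
  A_rec_case3_general X Y n h k
end

section
/- Let X, Y be subsets of the positive integers and n ≥ 1 an integer with n+1 ∉ X ∪ Y. Then for all k ≥ 0, V_{n+1,k}^{X,Y} = (k+1) · V_{n,k+1}^{X,Y} + (n+1−k) · V_{n,k}^{X,Y}. -/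
/-!
The pairs of `σ` are counted by their values `σ '' P ∩ Q`. Every permutation of `Option α` is
uniquely `swap none a * optionCongr τ`, and for the marked sets `some '' P`, `some '' Q` its
pair values are those of `τ` with `a` removed. Hence a `τ` with `m` pairs yields `m`
permutations with `m - 1` pairs and `|α| + 1 - m` with `m` pairs. Since `n + 1 ∉ X ∪ Y`, the
identification `Fin (n + 1) ≃ Option (Fin n)` sending the last point to `none` moves the problem
to this setting.
-/

open Equiv Set

theorem ncard_setOf_ncard_sdiff_singleton_eq {β : Type*} [Finite β] (S : Set β) (k : ℕ) :
    ({a | (S \ {a}).ncard = k}.ncard : ℤ) =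
      (if S.ncard = k + 1 then (k : ℤ) + 1 else 0) +
        (if S.ncard = k then (Nat.card β : ℤ) - k else 0) := by
  have mem_iff (hne : S.Nonempty → S.ncard - 1 ≠ k) (a : β) :
      (S \ {a}).ncard = k ↔ a ∉ S ∧ S.ncard = k := by
    by_cases ha : a ∈ S
    · simpa [ncard_sdiff_singleton_of_mem ha, ha] using hne ⟨a, ha⟩
    · simp [sdiff_singleton_eq_self ha, ha]
  by_cases hk1 : S.ncard = k + 1
  · have hS : {a | (S \ {a}).ncard = k} = S := by
      ext a
      by_cases ha : a ∈ S
      · simp [ncard_sdiff_singleton_of_mem ha, ha, hk1]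
      · simp [sdiff_singleton_eq_self ha, ha, hk1]
    simp [hS, hk1]
  have hS : {a | (S \ {a}).ncard = k} = if S.ncard = k then Sᶜ else ∅ := by
    ext a
    rw [mem_ofPred_eq, mem_iff fun h => by have := (ncard_pos).2 h; omega]
    split_ifs <;> simp_all
  have hle : S.ncard ≤ Nat.card β := ncard_le_card S
  split_ifs at hS ⊢ with hk
  · rw [hS, ncard_compl]
    omega
  · simp [hS]

theorem image_some_inter_image_some_swap_mul_optionCongr {α : Type*} [DecidableEq α]
    (τ : Perm α) (a : Option α) (P Q : Set α) :
    (swap none a * optionCongr τ) '' (some '' P) ∩ some '' Q = some '' (τ '' P ∩ Q) \ {a} := by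
  ext x
  have symm_apply : (swap none a * optionCongr τ).symm x = (swap none a x).map τ.symm := rfl
  rw [mem_inter_iff, (swap none a * optionCongr τ).image_eq_preimage_symm, mem_preimage,
    symm_apply]
  rcases x with _ | v
  · simp
  by_cases hv : some v = a
  · subst hv
    simp
  · simp [swap_apply_of_ne_of_ne (Option.some_ne_none v) hv, hv, τ.image_eq_preimage_symm]

theorem card_perm_option_image_inter_eq {α : Type*} [Fintype α] [DecidableEq α]
    (P Q : Set α) (k : ℕ) :
    (Nat.card {σ : Perm (Option α) // (σ '' (some '' P) ∩ some '' Q).ncard = k} : ℤ) =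
      (k + 1) * Nat.card {τ : Perm α // (τ '' P ∩ Q).ncard = k + 1} +
        (Fintype.card α + 1 - k) * Nat.card {τ : Perm α // (τ '' P ∩ Q).ncard = k} := by
  have fiber (τ : Perm α) :
      (Nat.card {a : Option α //
          ((swap none a * optionCongr τ) '' (some '' P) ∩ some '' Q).ncard = k} : ℤ) =
        (if (τ '' P ∩ Q).ncard = k + 1 then (k : ℤ) + 1 else 0) +
          (if (τ '' P ∩ Q).ncard = k then (Fintype.card α : ℤ) + 1 - k else 0) := by
    simp_rw [image_some_inter_image_some_swap_mul_optionCongr]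
    rw [← ncard_image_of_injective (τ '' P ∩ Q) (Option.some_injective α)]
    have := ncard_setOf_ncard_sdiff_singleton_eq (some '' (τ '' P ∩ Q)) k
    rw [Nat.card_eq_fintype_card (α := Option α), Fintype.card_option] at this
    push_cast at this
    rw [← this, ← Nat.card_coe_set_eq]
    rfl
  let pairs (σ : Perm (Option α)) : ℕ := (σ '' (some '' P) ∩ some '' Q).ncard
  have decompose :
      {σ : Perm (Option α) // pairs σ = k} ≃
        Σ τ : Perm α, {a : Option α // pairs (swap none a * optionCongr τ) = k} :=
    calc {σ : Perm (Option α) // pairs σ = k}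
        ≃ {x : Option α × Perm α // pairs (swap none x.1 * optionCongr x.2) = k} :=
          (Perm.decomposeOption.symm.subtypeEquiv fun _ => Iff.rfl).symm
      _ ≃ {x : Perm α × Option α // pairs (swap none x.2 * optionCongr x.1) = k} :=
          (prodComm _ _).subtypeEquiv fun _ => Iff.rfl
      _ ≃ _ := subtypeProdEquivSigmaSubtype fun τ a => pairs (swap none a * optionCongr τ) = k
  rw [Nat.card_congr decompose, Nat.card_sigma]
  push_cast
  simp only [pairs, fiber, Finset.sum_add_distrib, ← Finset.sum_filter, Finset.sum_const,
    nsmul_eq_mul]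
  simp only [Nat.card_eq_fintype_card, Fintype.card_subtype]
  ring

theorem card_perm_image_inter_congr {α β : Type*} (e : α ≃ β) (P Q : Set α) (k : ℕ) :
    Nat.card {σ : Perm α // (σ '' P ∩ Q).ncard = k} =
      Nat.card {σ : Perm β // (σ '' (e '' P) ∩ e '' Q).ncard = k} :=
  Nat.card_congr <| e.permCongr.subtypeEquiv fun σ => by
    have : e.permCongr σ '' (e '' P) = e '' (σ '' P) := by
      simp [image_image, permCongr_apply]
    rw [this, ← image_inter e.injective, ncard_image_of_injective _ e.injective]

def finPreimage (n : ℕ) (X : Set ℕ) : Set (Fin n) := {i | (i : ℕ) + 1 ∈ X}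

theorem V_eq_card (X Y : Set ℕ) (n k : ℕ) :
    V X Y n k =
      Nat.card {σ : Perm (Fin n) // (σ '' finPreimage n X ∩ finPreimage n Y).ncard = k} := by
  have (σ : Perm (Fin n)) :
      valCount X Y n σ = (σ '' finPreimage n X ∩ finPreimage n Y).ncard := by
    rw [← image_inter_preimage, ncard_image_of_injective _ σ.injective]
    rfl
  simp only [V, this]
  rfl

theorem finSuccEquivLast_image_finPreimage {n : ℕ} {X : Set ℕ} (h : n + 1 ∉ X) :
    finSuccEquivLast '' finPreimage (n + 1) X = some '' finPreimage n X := by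
  ext x
  rcases x with _ | i
  · simpa [finPreimage] using h
  · simp [finPreimage]

theorem V_rec_case1_general (X Y : Set ℕ) (n : ℕ)
    (h : n + 1 ∉ X ∪ Y) (k : ℕ) :
    (V X Y (n + 1) k : ℤ) =
      ((k : ℤ) + 1) * (V X Y n (k + 1) : ℤ) +
        ((n : ℤ) + 1 - (k : ℤ)) * (V X Y n k : ℤ) := by
  rw [mem_union, not_or] at h
  rw [V_eq_card, card_perm_image_inter_congr finSuccEquivLast,
    finSuccEquivLast_image_finPreimage h.1, finSuccEquivLast_image_finPreimage h.2,
    card_perm_option_image_inter_eq, Fintype.card_fin, V_eq_card, V_eq_card]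

/-- Recurrence for `V_{n,k}^{X,Y}` when `n+1 ∉ X ∪ Y`:
`V_{n+1,k} = (k+1) V_{n,k+1} + (n+1-k) V_{n,k}`. -/
theorem V_rec_case1 (X Y : Set ℕ) (hX : 0 ∉ X) (hY : 0 ∉ Y) (n : ℕ) (hn : 1 ≤ n)
    (h : n + 1 ∉ X ∪ Y) (k : ℕ) :
    (V X Y (n + 1) k : ℤ) =
      ((k : ℤ) + 1) * (V X Y n (k + 1) : ℤ) +
        ((n : ℤ) + 1 - (k : ℤ)) * (V X Y n k : ℤ) :=
  V_rec_case1_general X Y n h k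
end
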